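/- arXiv:1505.01094 — 8 statements merged into one kernel-verified Lean document; each statement's English description precedes it below -/
import Mathlib

section
/- Let P be a partially ordered set and let W ⊆ σP be a final segment of σP, i.e., if I ∈ W, J ∈ σP and I ⊆ J then J ∈ W. Suppose there exists a subset T ⊆ P which, with the ordering induced from P, is a tree of height ω such that for every n ∈ ℕ the n-th level of T is a maximal antichain in P, and for every branch I of T the ideal {p ∈ P : p ≤ t for some t ∈ I} belongs to W. Then Odd has a winning strategy in BM(P, W). -/
/-! Banach–Mazur game on a partially ordered set. -/

section BMposet

variable {P : Type*} [PartialOrder P]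

/-- An ideal of a poset: downward closed and upward directed. -/
def IsIdeal (I : Set P) : Prop :=
  (∀ x ∈ I, ∀ y, y ≤ x → y ∈ I) ∧ ∀ x ∈ I, ∀ y ∈ I, ∃ z ∈ I, x ≤ z ∧ y ≤ z

/-- A countably generated ideal: an ideal with a countable cofinal subset. -/
def IsCtblyGenIdeal (I : Set P) : Prop :=
  IsIdeal I ∧ ∃ C : Set P, C.Countable ∧ C ⊆ I ∧ ∀ x ∈ I, ∃ c ∈ C, x ≤ c

/-- The ideal generated by a play `u₀ ≤ u₁ ≤ ⋯`. -/
def playIdeal (u : ℕ → P) : Set P := {p | ∃ n, p ≤ u n}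

/-- A finite sequence is increasing. -/
def IncrSeq {m : ℕ} (v : Fin m → P) : Prop := ∀ i j : Fin m, i ≤ j → v i ≤ v j

/-- A strategy for Odd: a value for every finite sequence of odd length. -/
def OddStrategy (P : Type*) := (k : ℕ) → (Fin (2 * k + 1) → P) → P

/-- A strategy for Odd is valid if it assigns, to every finite increasing
sequence of odd length, an element above its last term. -/
def OddValid (s : OddStrategy P) : Prop :=
  ∀ (k : ℕ) (v : Fin (2 * k + 1) → P), IncrSeq v → v (Fin.last (2 * k)) ≤ s k v

/-- A play follows Odd's strategy `s` if every odd-indexed term is the value of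
`s` on the preceding terms. -/
def OddFollows (u : ℕ → P) (s : OddStrategy P) : Prop :=
  ∀ k : ℕ, u (2 * k + 1) = s k (fun i => u i.val)

/-- Odd has a winning strategy in the Banach–Mazur game `BM(P, W)`. -/
def OddWins (P : Type*) [PartialOrder P] (W : Set (Set P)) : Prop :=
  ∃ s : OddStrategy P, OddValid s ∧
    ∀ u : ℕ → P, Monotone u → OddFollows u s → playIdeal u ∈ W

/-- A strategy for Eve: a value for the empty sequence and for every finite
sequence of even positive length. -/
def EveStrategy (P : Type*) := (k : ℕ) → (Fin (2 * k) → P) → P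

/-- A strategy for Eve is valid if it assigns, to every finite increasing
sequence of even length, an element above all its terms (for the empty
sequence this is no restriction). -/
def EveValid (e : EveStrategy P) : Prop :=
  ∀ (k : ℕ) (v : Fin (2 * k) → P), IncrSeq v → ∀ i : Fin (2 * k), v i ≤ e k v

/-- A play follows Eve's strategy `e` if every even-indexed term is the value of
`e` on the preceding terms. -/
def EveFollows (u : ℕ → P) (e : EveStrategy P) : Prop :=
  ∀ k : ℕ, u (2 * k) = e k (fun i => u i.val)

/-- Eve has a winning strategy in the Banach–Mazur game `BM(P, W)`. -/
def EveWins (P : Type*) [PartialOrder P] (W : Set (Set P)) : Prop :=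
  ∃ e : EveStrategy P, EveValid e ∧
    ∀ u : ℕ → P, Monotone u → EveFollows u e → playIdeal u ∉ W

end BMposet

section Tree

variable {P : Type*} [PartialOrder P]

/-- The set of strict predecessors of `t` inside `T`. -/
def predSet (T : Set P) (t : P) : Set P := {x ∈ T | x < t}

/-- `T ⊆ P`, with the induced ordering, is a tree of height ω: the set of strict
predecessors of every element is a finite chain (hence well-ordered of finite
order type). -/
def IsOmegaTree (T : Set P) : Prop :=
  ∀ t ∈ T, (predSet T t).Finite ∧ IsChain (· ≤ ·) (predSet T t)

/-- The `n`-th level of a tree `T` of height ω: the elements with exactly `n`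
strict predecessors in `T`. -/
def treeLevel (T : Set P) (n : ℕ) : Set P := {t ∈ T | (predSet T t).ncard = n}

/-- Two elements of `P` are compatible if they have a common upper bound. -/
def Compat (x y : P) : Prop := ∃ z : P, x ≤ z ∧ y ≤ z

/-- A maximal antichain in `P`: a set of pairwise incompatible elements such that
every element of `P` is compatible with some member. -/
def IsMaxAntichainIn (A : Set P) : Prop :=
  (∀ x ∈ A, ∀ y ∈ A, x ≠ y → ¬ Compat x y) ∧ ∀ p : P, ∃ a ∈ A, Compat p a

/-- A branch of `T`: a maximal chain contained in `T`. -/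
def IsBranch (T I : Set P) : Prop :=
  I ⊆ T ∧ IsChain (· ≤ ·) I ∧ ∀ J : Set P, J ⊆ T → IsChain (· ≤ ·) J → I ⊆ J → J = I

end Tree


/-!
Odd answers Eve's move `u₂ₖ` by a common upper bound `u₂ₖ₊₁` of `u₂ₖ` and some node `tₖ` of
level `k`, which exists because that level is a maximal antichain. Consecutive nodes `tₖ, tₖ₊₁`
lie below `u₂ₖ₊₃`, so the predecessor of `tₖ₊₁` on level `k`, being compatible with `tₖ`, is
`tₖ`: the nodes climb the tree. A branch `I` extending them lies below them, because a node of
`I` on level `m` is comparable with `tₘ` and cannot lie above it. Hence the ideal of `I`, which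
is in `W`, is contained in the ideal of the play, and `W` is a final segment.
-/

section TreeLevels

variable {P : Type*} [PartialOrder P] {T : Set P}

lemma IsMaxAntichainIn.eq_of_le {A : Set P} (hA : IsMaxAntichainIn A) {a b z : P}
    (ha : a ∈ A) (hb : b ∈ A) (haz : a ≤ z) (hbz : b ≤ z) : a = b := by
  by_contra hne
  exact hA.1 a ha b hb hne ⟨z, haz, hbz⟩

lemma ncard_predSet_lt_of_lt (htree : IsOmegaTree T) {x y : P} (hy : y ∈ T) (hx : x ∈ T)
    (hyx : y < x) : (predSet T y).ncard < (predSet T x).ncard := by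
  have hsub : insert y (predSet T y) ⊆ predSet T x := by
    rintro z (rfl | ⟨hzT, hzy⟩)
    · exact ⟨hy, hyx⟩
    · exact ⟨hzT, hzy.trans hyx⟩
  have hcard := Set.ncard_le_ncard hsub (htree x hx).1
  rwa [Set.ncard_insert_of_notMem (fun h => lt_irrefl y h.2) (htree y hy).1] at hcard

lemma exists_lt_of_mem_treeLevel_succ (htree : IsOmegaTree T) {t : P} {k : ℕ}
    (ht : t ∈ treeLevel T (k + 1)) : ∃ s ∈ treeLevel T k, s < t := by
  obtain ⟨htT, hcard⟩ := ht
  obtain ⟨hfin, hchain⟩ := htree t htT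
  have hne : (predSet T t).Nonempty :=
    Set.nonempty_of_ncard_ne_zero (by omega)
  obtain ⟨s, hs, hmax⟩ := hfin.exists_maximal hne
  have heq : predSet T s = predSet T t \ {s} := by
    ext x
    constructor
    · rintro ⟨hxT, hxs⟩
      exact ⟨⟨hxT, hxs.trans hs.2⟩, hxs.ne⟩
    · rintro ⟨hxt, hxs⟩
      rcases hchain hxt hs hxs with h | h
      · exact ⟨hxt.1, lt_of_le_of_ne h hxs⟩
      · exact absurd (le_antisymm (hmax hxt h) h) hxs
  refine ⟨s, ⟨hs.1, ?_⟩, hs.2⟩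
  rw [heq, Set.ncard_sdiff_singleton_of_mem hs, hcard]
  omega

lemma lt_of_mem_treeLevel_succ_of_compat (htree : IsOmegaTree T) {k : ℕ}
    (hlevel : IsMaxAntichainIn (treeLevel T k)) {a b z : P} (ha : a ∈ treeLevel T k)
    (hb : b ∈ treeLevel T (k + 1)) (haz : a ≤ z) (hbz : b ≤ z) : a < b := by
  obtain ⟨s, hs, hsb⟩ := exists_lt_of_mem_treeLevel_succ htree hb
  rwa [← hlevel.eq_of_le hs ha (hsb.le.trans hbz) haz]

lemma IsChain.exists_isBranch_superset {C : Set P} (hCT : C ⊆ T) (hC : IsChain (· ≤ ·) C) :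
    ∃ I, IsBranch T I ∧ C ⊆ I := by
  obtain ⟨I, hCI, hI⟩ := zorn_subset_nonempty {J | J ⊆ T ∧ IsChain (· ≤ ·) J}
    (fun c hc hcc _ => by
      refine ⟨⋃₀ c, ⟨Set.sUnion_subset fun J hJ => (hc hJ).1, ?_⟩,
        fun _ => Set.subset_sUnion_of_mem⟩
      rintro x ⟨J, hJ, hxJ⟩ y ⟨K, hK, hyK⟩ hxy
      rcases hcc.total hJ hK with h | h
      · exact (hc hK).2 (h hxJ) hyK hxy
      · exact (hc hJ).2 hxJ (h hyK) hxy)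
    C ⟨hCT, hC⟩
  exact ⟨I, ⟨hI.prop.1, hI.prop.2, fun J hJT hJ hIJ => hI.eq_of_subset ⟨hJT, hJ⟩ hIJ |>.symm⟩,
    hCI⟩

lemma exists_isBranch_le_of_monotone (htree : IsOmegaTree T) {t : ℕ → P}
    (ht : ∀ k, t k ∈ treeLevel T k) (hmono : Monotone t) :
    ∃ I, IsBranch T I ∧ ∀ x ∈ I, ∃ k, x ≤ t k := by
  obtain ⟨I, hI, htI⟩ := hmono.isChain_range.exists_isBranch_superset
    (Set.range_subset_iff.2 fun k => (ht k).1)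
  refine ⟨I, hI, fun x hx => ⟨(predSet T x).ncard, ?_⟩⟩
  set m := (predSet T x).ncard
  rcases eq_or_ne x (t m) with h | h
  · exact h.le
  refine (hI.2.1 hx (htI ⟨m, rfl⟩) h).resolve_right fun hle => ?_
  have := ncard_predSet_lt_of_lt htree (ht m).1 (hI.1 hx) (lt_of_le_of_ne hle (Ne.symm h))
  rw [(ht m).2] at this
  exact lt_irrefl m this

end TreeLevels

lemma isCtblyGenIdeal_playIdeal {P : Type*} [PartialOrder P] {u : ℕ → P} (hu : Monotone u) :
    IsCtblyGenIdeal (playIdeal u) := by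
  refine ⟨⟨?_, ?_⟩, Set.range u, Set.countable_range u, ?_, ?_⟩
  · rintro x ⟨n, hn⟩ y hyx
    exact ⟨n, hyx.trans hn⟩
  · rintro x ⟨n, hn⟩ y ⟨m, hm⟩
    exact ⟨u (max n m), ⟨max n m, le_rfl⟩, hn.trans (hu (le_max_left _ _)),
      hm.trans (hu (le_max_right _ _))⟩
  · rintro _ ⟨n, rfl⟩
    exact ⟨n, le_rfl⟩
  · rintro x ⟨n, hn⟩
    exact ⟨u n, ⟨n, rfl⟩, hn⟩

theorem odd_wins_of_tree_general {P : Type*} [PartialOrder P] (W : Set (Set P))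
    (hfinal : ∀ I ∈ W, ∀ J : Set P, IsCtblyGenIdeal J → I ⊆ J → J ∈ W)
    (T : Set P) (htree : IsOmegaTree T)
    (hlevels : ∀ n : ℕ, IsMaxAntichainIn (treeLevel T n))
    (hbranch : ∀ I : Set P, IsBranch T I → {p : P | ∃ t ∈ I, p ≤ t} ∈ W) :
    OddWins P W := by
  choose node hnode bound hle_bound hnode_le using fun k p => (hlevels k).2 p
  refine ⟨fun k v => bound k (v (Fin.last (2 * k))), fun k v _ => hle_bound _ _, ?_⟩
  intro u hu hfollows
  set t := fun k => node k (u (2 * k))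
  have ht_le : ∀ k, t k ≤ u (2 * k + 1) := fun k => hfollows k ▸ hnode_le _ _
  have ht_mono : Monotone t := monotone_nat_of_le_succ fun k =>
    (lt_of_mem_treeLevel_succ_of_compat htree (hlevels k) (hnode _ _) (hnode _ _)
      ((ht_le k).trans (hu (by omega))) (ht_le (k + 1))).le
  obtain ⟨I, hI, hI_le⟩ := exists_isBranch_le_of_monotone htree (fun k => hnode _ _) ht_mono
  refine hfinal _ (hbranch I hI) _ (isCtblyGenIdeal_playIdeal hu) ?_
  rintro p ⟨x, hx, hpx⟩
  obtain ⟨k, hxk⟩ := hI_le x hx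
  exact ⟨2 * k + 1, hpx.trans (hxk.trans (ht_le k))⟩

/-- Suppose `W ⊆ σP` is a final segment of `σP` and there is a
subset `T ⊆ P` which, with the induced ordering, is a tree of height ω, whose
every level is a maximal antichain in `P`, and such that for every branch `I` of
`T` the ideal generated by `I` belongs to `W`.  Then Odd has a winning strategy
in `BM(P, W)`. -/
theorem odd_wins_of_tree {P : Type*} [PartialOrder P] (W : Set (Set P))
    (hW : ∀ I ∈ W, IsCtblyGenIdeal I)
    (hfinal : ∀ I ∈ W, ∀ J : Set P, IsCtblyGenIdeal J → I ⊆ J → J ∈ W)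
    (T : Set P) (htree : IsOmegaTree T)
    (hlevels : ∀ n : ℕ, IsMaxAntichainIn (treeLevel T n))
    (hbranch : ∀ I : Set P, IsBranch T I → {p : P | ∃ t ∈ I, p ≤ t} ∈ W) :
    OddWins P W :=
  odd_wins_of_tree_general W hfinal T htree hlevels hbranch
end

section
/- Let φ : Q → P be a dominating map of partially ordered sets, let W ⊆ σP, and let W^φ be the set of all countably generated ideals I of Q such that the ideal of P generated by φ[I], namely {p ∈ P : p ≤ φ(q) for some q ∈ I}, belongs to W. Then Odd has a winning strategy in BM(P, W) if and only if Odd has a winning strategy in BM(Q, W^φ). -/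
/-- A map of posets is dominating if it is order preserving, has cofinal image,
and every element above a value `φ q` is dominated by a value `φ q'` with `q' ≥ q`. -/
def Dominating {Q P : Type*} [PartialOrder Q] [PartialOrder P] (φ : Q → P) : Prop :=
  Monotone φ ∧ (∀ p : P, ∃ q : Q, p ≤ φ q) ∧
    ∀ (q : Q) (p : P), φ q ≤ p → ∃ q' : Q, q ≤ q' ∧ p ≤ φ q'

/-- Given `φ : Q → P` and `W ⊆ σP`, the family `W^φ` of all countably generated
ideals `I` of `Q` such that the ideal of `P` generated by `φ[I]` is in `W`. -/
def pullbackW {Q P : Type*} [PartialOrder Q] [PartialOrder P] (φ : Q → P)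
    (W : Set (Set P)) : Set (Set Q) :=
  {I | IsCtblyGenIdeal I ∧ {p : P | ∃ q ∈ I, p ≤ φ q} ∈ W}


/-! ### Auxiliary material for the proof -/

section OddAux

variable {Q P : Type*} [PartialOrder Q] [PartialOrder P]

lemma playIdeal_ctblyGen {u : ℕ → P} (hu : Monotone u) :
    IsCtblyGenIdeal (playIdeal u) := by
  refine ⟨⟨?_, ?_⟩, Set.range u, Set.countable_range u, ?_, ?_⟩
  · rintro x ⟨n, hn⟩ y hy; exact ⟨n, hy.trans hn⟩
  · rintro x ⟨n, hn⟩ y ⟨m, hm⟩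
    exact ⟨u (max n m), ⟨max n m, le_rfl⟩, hn.trans (hu (le_max_left _ _)),
      hm.trans (hu (le_max_right _ _))⟩
  · rintro _ ⟨n, rfl⟩; exact ⟨n, le_rfl⟩
  · rintro x ⟨n, hn⟩; exact ⟨u n, ⟨n, rfl⟩, hn⟩

lemma mono_of_step {f : ℕ → P} {n : ℕ} (h : ∀ m, m < n → f m ≤ f (m + 1)) :
    ∀ i j, i ≤ j → j ≤ n → f i ≤ f j := by
  intro i j hij hjn
  induction j with
  | zero => simp_all
  | succ j ih =>
    rcases Nat.lt_or_ge i (j+1) with hlt | hge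
    · exact (ih (by omega) (by omega)).trans (h j (by omega))
    · have : i = j + 1 := by omega
      subst this; exact le_rfl

/-- The choice of an element of `Q` above `q` whose image dominates `p`,
when it exists; otherwise `q` itself. -/
noncomputable def domChoice {φ : Q → P} (hφ : Dominating φ) (q : Q) (p : P) : Q :=
  @dite _ _ (Classical.propDecidable _)
    (fun hc : φ q ≤ p => Classical.choose (hφ.2.2 q p hc)) (fun _ => q)

lemma le_domChoice {φ : Q → P} (hφ : Dominating φ) (q : Q) (p : P) :
    q ≤ domChoice hφ q p := by
  unfold domChoice
  split
  · exact (Classical.choose_spec (hφ.2.2 q p (by assumption))).1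
  · exact le_rfl

lemma domChoice_spec {φ : Q → P} (hφ : Dominating φ) {q : Q} {p : P}
    (hc : φ q ≤ p) : p ≤ φ (domChoice hφ q p) := by
  unfold domChoice
  rw [dif_pos hc]
  exact (Classical.choose_spec (hφ.2.2 q p hc)).2

/-- The simulated play in `P` corresponding to a play in `Q`, where Eve's
moves are images under `φ` and Odd's moves are given by `s`. -/
noncomputable def sim (s : OddStrategy P) (φ : Q → P) (u : ℕ → Q) : ℕ → P
  | n =>
    if h : n % 2 = 0 then φ (u n)
    else s (n / 2) (fun i => sim s φ u i.val)
termination_by n => n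
decreasing_by exact lt_of_lt_of_le i.isLt (by omega)

lemma sim_even (s : OddStrategy P) (φ : Q → P) (u : ℕ → Q) {n : ℕ}
    (h : n % 2 = 0) : sim s φ u n = φ (u n) := by
  rw [sim, dif_pos h]

lemma sim_odd (s : OddStrategy P) (φ : Q → P) (u : ℕ → Q) (k : ℕ) :
    sim s φ u (2 * k + 1) = s k (fun i => sim s φ u i.val) := by
  rw [sim, dif_neg (by omega)]
  have h2 : (2 * k + 1) / 2 = k := by omega
  rw [h2]

lemma sim_congr (s : OddStrategy P) (φ : Q → P) (n : ℕ) :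
    ∀ {u u' : ℕ → Q}, (∀ m, m ≤ n → u m = u' m) →
      sim s φ u n = sim s φ u' n := by
  induction n using Nat.strong_induction_on with
  | _ n ih =>
    intro u u' h
    rw [sim, sim]
    by_cases hp : n % 2 = 0
    · rw [dif_pos hp, dif_pos hp, h n le_rfl]
    · rw [dif_neg hp, dif_neg hp]
      congr 1
      funext i
      exact ih i.val (lt_of_lt_of_le i.isLt (by omega))
        (fun m hm => h m (le_trans hm (by omega)))

/-- The simulated play in `Q` corresponding to a play in `P`: Eve's moves are
lifted via domination/cofinality, Odd's moves are given by `t`. -/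
noncomputable def sim2 (t : OddStrategy Q) {φ : Q → P} (hφ : Dominating φ)
    (u : ℕ → P) : ℕ → Q
  | 0 => Classical.choose (hφ.2.1 (u 0))
  | (n + 1) =>
    if h : (n + 1) % 2 = 0 then domChoice hφ (sim2 t hφ u n) (u (n + 1))
    else t ((n + 1) / 2) (fun i => sim2 t hφ u i.val)
termination_by n => n
decreasing_by
  · exact Nat.lt_succ_self n
  · exact lt_of_lt_of_le i.isLt (by omega)

lemma sim2_zero (t : OddStrategy Q) {φ : Q → P} (hφ : Dominating φ)
    (u : ℕ → P) : sim2 t hφ u 0 = Classical.choose (hφ.2.1 (u 0)) := by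
  rw [sim2]

lemma sim2_even (t : OddStrategy Q) {φ : Q → P} (hφ : Dominating φ)
    (u : ℕ → P) (k : ℕ) :
    sim2 t hφ u (2 * k + 2) = domChoice hφ (sim2 t hφ u (2 * k + 1)) (u (2 * k + 2)) := by
  have : 2 * k + 2 = (2 * k + 1) + 1 := by omega
  rw [this, sim2, dif_pos (by omega)]

lemma sim2_odd (t : OddStrategy Q) {φ : Q → P} (hφ : Dominating φ)
    (u : ℕ → P) (k : ℕ) :
    sim2 t hφ u (2 * k + 1) = t k (fun i => sim2 t hφ u i.val) := by
  conv_lhs => rw [sim2]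
  rw [dif_neg (by omega)]
  have h2 : (2 * k + 1) / 2 = k := by omega
  rw [h2]

lemma sim2_congr (t : OddStrategy Q) {φ : Q → P} (hφ : Dominating φ) (n : ℕ) :
    ∀ {u u' : ℕ → P}, (∀ m, m ≤ n → u m = u' m) →
      sim2 t hφ u n = sim2 t hφ u' n := by
  induction n using Nat.strong_induction_on with
  | _ n ih =>
    intro u u' h
    match n with
    | 0 => rw [sim2_zero, sim2_zero, h 0 le_rfl]
    | (m + 1) =>
      rw [sim2, sim2]
      by_cases hp : (m + 1) % 2 = 0
      · rw [dif_pos hp, dif_pos hp,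
          ih m (Nat.lt_succ_self m) (fun j hj => h j (le_trans hj (by omega))),
          h (m+1) le_rfl]
      · rw [dif_neg hp, dif_neg hp]
        congr 1
        funext i
        exact ih i.val (lt_of_lt_of_le i.isLt (by omega))
          (fun j hj => h j (le_trans hj (by omega)))

end OddAux


section OddMain

variable {Q P : Type*} [PartialOrder Q] [PartialOrder P]

lemma oddWins_pullback_of_oddWins (φ : Q → P) (hφ : Dominating φ) (W : Set (Set P))
    (h : OddWins P W) : OddWins Q (pullbackW φ W) := by
  obtain ⟨s, hsv, hsw⟩ := h
  refine ⟨fun k v => domChoice hφ (v (Fin.last (2 * k)))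
      (sim s φ (fun n => v ⟨min n (2 * k), by omega⟩) (2 * k + 1)), ?_, ?_⟩
  · intro k v _
    exact le_domChoice hφ _ _
  · intro w hw hf
    set p := sim s φ w with hp
    have key : ∀ n, p n ≤ p (n + 1) ∧ (n % 2 = 1 → p n ≤ φ (w n)) := by
      intro n
      induction n using Nat.strong_induction_on with
      | _ n ih =>
        have mono : ∀ i j, i ≤ j → j ≤ n → p i ≤ p j :=
          mono_of_step (fun m hm => (ih m hm).1)
        by_cases hn : n % 2 = 0
        · constructor
          · have hodd : n + 1 = 2 * (n / 2) + 1 := by omega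
            have hincr : IncrSeq (fun i : Fin (2 * (n / 2) + 1) => p i.val) := by
              intro i j hij
              exact mono i.val j.val hij (by omega)
            have hv := hsv (n / 2) _ hincr
            rw [hodd, hp, sim_odd]
            have h2 : 2 * (n / 2) = n := by omega
            simpa [Fin.last, h2] using hv
          · intro h1; exact absurd h1 (by omega)
        · obtain ⟨k, rfl⟩ : ∃ k, n = 2 * k + 1 := ⟨n / 2, by omega⟩
          have htr : sim s φ (fun n => w (min n (2 * k))) (2 * k + 1) = p (2 * k + 1) := by
            rw [hp, sim_odd, sim_odd]
            congr 1
            funext i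
            refine sim_congr s φ i.val (fun m hm => ?_)
            have hmin : min m (2 * k) = m := by
              have := i.isLt; omega
            rw [hmin]
          have hg : φ (w (2 * k)) ≤ sim s φ (fun n => w (min n (2 * k))) (2 * k + 1) := by
            rw [htr]
            have hstep : p (2 * k) ≤ p (2 * k + 1) := (ih (2 * k) (by omega)).1
            calc φ (w (2 * k)) = p (2 * k) := (sim_even s φ w (by omega)).symm
              _ ≤ p (2 * k + 1) := hstep
          have hfoll : w (2 * k + 1) =
              domChoice hφ (w (2 * k)) (sim s φ (fun n => w (min n (2 * k))) (2 * k + 1)) :=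
            hf k
          have hodd : p (2 * k + 1) ≤ φ (w (2 * k + 1)) := by
            rw [hfoll, ← htr]
            exact domChoice_spec hφ hg
          refine ⟨?_, fun _ => hodd⟩
          have he : p (2 * k + 1 + 1) = φ (w (2 * k + 1 + 1)) := sim_even s φ w (by omega)
          rw [he]
          exact hodd.trans (hφ.1 (hw (by omega)))
    have pmono : Monotone p := monotone_nat_of_le_succ (fun n => (key n).1)
    have pfoll : OddFollows p s := fun k => sim_odd s φ w k
    have hpW : playIdeal p ∈ W := hsw p pmono pfoll
    refine ⟨playIdeal_ctblyGen hw, ?_⟩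
    have hset : {r : P | ∃ q ∈ playIdeal w, r ≤ φ q} = playIdeal p := by
      ext r
      constructor
      · rintro ⟨q, ⟨n, hn⟩, hr⟩
        refine ⟨2 * n, ?_⟩
        calc r ≤ φ q := hr
          _ ≤ φ (w n) := hφ.1 hn
          _ ≤ φ (w (2 * n)) := hφ.1 (hw (by omega))
          _ = p (2 * n) := (sim_even s φ w (by omega)).symm
      · rintro ⟨n, hn⟩
        by_cases h2 : n % 2 = 0
        · exact ⟨w n, ⟨n, le_rfl⟩, by rwa [hp, sim_even s φ w h2] at hn⟩
        · exact ⟨w n, ⟨n, le_rfl⟩, hn.trans ((key n).2 (by omega))⟩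
    exact hset ▸ hpW

lemma oddWins_of_oddWins_pullback (φ : Q → P) (hφ : Dominating φ) (W : Set (Set P))
    (h : OddWins Q (pullbackW φ W)) : OddWins P W := by
  obtain ⟨t, htv, htw⟩ := h
  refine ⟨fun k v =>
      @dite _ (v (Fin.last (2 * k)) ≤
          φ (sim2 t hφ (fun n => v ⟨min n (2 * k), by omega⟩) (2 * k + 1)))
        (Classical.propDecidable _)
        (fun _ => φ (sim2 t hφ (fun n => v ⟨min n (2 * k), by omega⟩) (2 * k + 1)))
        (fun _ => v (Fin.last (2 * k))), ?_, ?_⟩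
  · intro k v _
    dsimp only
    split
    · assumption
    · exact le_rfl
  · intro u hu hf
    set σ := sim2 t hφ u with hσ
    have key : ∀ n, (σ n ≤ σ (n + 1)) ∧ (u n ≤ φ (σ n)) ∧ (n % 2 = 1 → u n = φ (σ n)) := by
      intro n
      induction n using Nat.strong_induction_on with
      | _ n ih =>
        have mono : ∀ i j, i ≤ j → j ≤ n → σ i ≤ σ j :=
          mono_of_step (fun m hm => (ih m hm).1)
        have hoddn : n % 2 = 1 → u n = φ (σ n) := by
          intro hodd
          obtain ⟨k, rfl⟩ : ∃ k, n = 2 * k + 1 := ⟨n / 2, by omega⟩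
          have htr : sim2 t hφ (fun n => u (min n (2 * k))) (2 * k + 1) = σ (2 * k + 1) := by
            rw [hσ, sim2_odd, sim2_odd]
            congr 1
            funext i
            refine sim2_congr t hφ i.val (fun m hm => ?_)
            have hmin : min m (2 * k) = m := by
              have := i.isLt; omega
            rw [hmin]
          have hg : u (2 * k) ≤ φ (sim2 t hφ (fun n => u (min n (2 * k))) (2 * k + 1)) := by
            rw [htr]
            calc u (2 * k) ≤ φ (σ (2 * k)) := (ih (2 * k) (by omega)).2.1
              _ ≤ φ (σ (2 * k + 1)) := hφ.1 ((ih (2 * k) (by omega)).1)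
          have hfoll : u (2 * k + 1) =
              @dite _ (u (2 * k) ≤ φ (sim2 t hφ (fun n => u (min n (2 * k))) (2 * k + 1)))
                (Classical.propDecidable _)
                (fun _ => φ (sim2 t hφ (fun n => u (min n (2 * k))) (2 * k + 1)))
                (fun _ => u (2 * k)) := hf k
          rw [hfoll, dif_pos hg, htr]
        refine ⟨?_, ?_, hoddn⟩
        · by_cases hn : (n + 1) % 2 = 0
          · obtain ⟨k, hk⟩ : ∃ k, n + 1 = 2 * k + 2 := ⟨n / 2, by omega⟩
            rw [hk, hσ, sim2_even]
            have : (2 : ℕ) * k + 1 = n := by omega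
            rw [this]
            exact le_domChoice hφ _ _
          · obtain ⟨k, hk⟩ : ∃ k, n + 1 = 2 * k + 1 := ⟨(n + 1) / 2, by omega⟩
            have hincr : IncrSeq (fun i : Fin (2 * k + 1) => σ i.val) := by
              intro i j hij
              exact mono i.val j.val hij (by omega)
            have hv := htv k _ hincr
            rw [hk, hσ, sim2_odd]
            have h2 : 2 * k = n := by omega
            simpa [Fin.last, h2] using hv
        · match n with
          | 0 =>
            rw [hσ, sim2_zero]
            exact Classical.choose_spec (hφ.2.1 (u 0))
          | (m + 1) =>
            by_cases hm : (m + 1) % 2 = 1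
            · exact le_of_eq (hoddn hm)
            · obtain ⟨k, hk⟩ : ∃ k, m + 1 = 2 * k + 2 := ⟨m / 2, by omega⟩
              have hprev : u (2 * k + 1) = φ (σ (2 * k + 1)) :=
                (ih (2 * k + 1) (by omega)).2.2 (by omega)
              have hg : φ (σ (2 * k + 1)) ≤ u (2 * k + 2) := by
                rw [← hprev]; exact hu (by omega)
              rw [hk, hσ, sim2_even]
              exact domChoice_spec hφ hg
    have σmono : Monotone σ := monotone_nat_of_le_succ (fun n => (key n).1)
    have σfoll : OddFollows σ t := fun k => sim2_odd t hφ u k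
    have hσW : playIdeal σ ∈ pullbackW φ W := htw σ σmono σfoll
    obtain ⟨-, hJ⟩ := hσW
    have hset : {r : P | ∃ q ∈ playIdeal σ, r ≤ φ q} = playIdeal u := by
      ext r
      constructor
      · rintro ⟨q, ⟨n, hn⟩, hr⟩
        refine ⟨2 * n + 1, ?_⟩
        calc r ≤ φ q := hr
          _ ≤ φ (σ n) := hφ.1 hn
          _ ≤ φ (σ (2 * n + 1)) := hφ.1 (σmono (by omega))
          _ = u (2 * n + 1) := ((key (2 * n + 1)).2.2 (by omega)).symm
      · rintro ⟨n, hn⟩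
        exact ⟨σ n, ⟨n, le_rfl⟩, hn.trans ((key n).2.1)⟩
    exact hset ▸ hJ

end OddMain

/-- For a dominating map `φ : Q → P` and `W ⊆ σP`, Odd has a
winning strategy in `BM(P, W)` iff Odd has a winning strategy in `BM(Q, W^φ)`. -/
theorem odd_wins_iff_of_dominating {Q P : Type*} [PartialOrder Q] [PartialOrder P]
    (φ : Q → P) (hφ : Dominating φ) (W : Set (Set P))
    (hW : ∀ I ∈ W, IsCtblyGenIdeal I) :
    OddWins P W ↔ OddWins Q (pullbackW φ W) :=
  ⟨oddWins_pullback_of_oddWins φ hφ W, oddWins_of_oddWins_pullback φ hφ W⟩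
end

section
/- Let X be a nonempty metrizable topological space containing a dense completely metrizable subspace. Then Odd has a stationary winning strategy in the classical Banach–Mazur game BM(X): there is a function s assigning to every nonempty open set U ⊆ X a nonempty open set s(U) ⊆ U such that Odd wins every play U₀ ⊇ U₁ ⊇ U₂ ⊇ ⋯ in which U₂ₖ₊₁ = s(U₂ₖ) for all k. -/
/-! The classical Banach–Mazur game on a topological space. -/

section BMtop

variable {X : Type*} [TopologicalSpace X]

/-- A play of the Banach–Mazur game: a decreasing sequence of nonempty open sets. -/
def TopPlay (U : ℕ → Set X) : Prop :=
  (∀ n, IsOpen (U n)) ∧ (∀ n, (U n).Nonempty) ∧ ∀ n, U (n + 1) ⊆ U n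

/-- A finite decreasing sequence of nonempty open sets (a partial play). -/
def TopPartialPlay {m : ℕ} (v : Fin m → Set X) : Prop :=
  (∀ i, IsOpen (v i)) ∧ (∀ i, (v i).Nonempty) ∧ ∀ i j : Fin m, i ≤ j → v j ⊆ v i

/-- A strategy for Odd: a value for every finite sequence of odd length. -/
def TopOddStrategy (X : Type*) := (k : ℕ) → (Fin (2 * k + 1) → Set X) → Set X

/-- A strategy for Odd is valid if it assigns, to every finite decreasing
sequence of nonempty open sets of odd length, a nonempty open subset of its
last term. -/
def TopOddValid (s : TopOddStrategy X) : Prop :=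
  ∀ (k : ℕ) (v : Fin (2 * k + 1) → Set X), TopPartialPlay v →
    IsOpen (s k v) ∧ (s k v).Nonempty ∧ s k v ⊆ v (Fin.last (2 * k))

/-- A play follows Odd's strategy `s` if every odd-indexed term is the value of
`s` on the preceding terms. -/
def TopOddFollows (U : ℕ → Set X) (s : TopOddStrategy X) : Prop :=
  ∀ k : ℕ, U (2 * k + 1) = s k (fun i => U i.val)

/-- Odd has a winning strategy in the classical Banach–Mazur game `BM(X)`
(he wins iff the intersection of the play is nonempty). -/
def TopOddWins (X : Type*) [TopologicalSpace X] : Prop :=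
  ∃ s : TopOddStrategy X, TopOddValid s ∧
    ∀ U : ℕ → Set X, TopPlay U → TopOddFollows U s → (⋂ n, U n).Nonempty

/-- A strategy for Eve: a value for the empty sequence and for every finite
sequence of even positive length. -/
def TopEveStrategy (X : Type*) := (k : ℕ) → (Fin (2 * k) → Set X) → Set X

/-- A strategy for Eve is valid if it assigns, to every finite decreasing
sequence of nonempty open sets of even length, a nonempty open set contained in
all of its terms (for the empty sequence: just a nonempty open set). -/
def TopEveValid (e : TopEveStrategy X) : Prop :=
  ∀ (k : ℕ) (v : Fin (2 * k) → Set X), TopPartialPlay v →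
    IsOpen (e k v) ∧ (e k v).Nonempty ∧ ∀ i : Fin (2 * k), e k v ⊆ v i

/-- A play follows Eve's strategy `e` if every even-indexed term is the value of
`e` on the preceding terms. -/
def TopEveFollows (U : ℕ → Set X) (e : TopEveStrategy X) : Prop :=
  ∀ k : ℕ, U (2 * k) = e k (fun i => U i.val)

/-- Eve has a winning strategy in the classical Banach–Mazur game `BM(X)`
(she wins iff the intersection of the play is empty). -/
def TopEveWins (X : Type*) [TopologicalSpace X] : Prop :=
  ∃ e : TopEveStrategy X, TopEveValid e ∧
    ∀ U : ℕ → Set X, TopPlay U → TopEveFollows U e → ¬ (⋂ n, U n).Nonempty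

/-- Odd has a winning strategy in the game `BM(X, ⋆)` (he wins iff the
intersection of the play is a one-point set). -/
def TopOddWinsStar (X : Type*) [TopologicalSpace X] : Prop :=
  ∃ s : TopOddStrategy X, TopOddValid s ∧
    ∀ U : ℕ → Set X, TopPlay U → TopOddFollows U s → ∃ x : X, (⋂ n, U n) = {x}

/-- Eve has a winning strategy in the game `BM(X, ⋆)` (she wins iff the
intersection of the play is not a one-point set). -/
def TopEveWinsStar (X : Type*) [TopologicalSpace X] : Prop :=
  ∃ e : TopEveStrategy X, TopEveValid e ∧
    ∀ U : ℕ → Set X, TopPlay U → TopEveFollows U e → ¬ ∃ x : X, (⋂ n, U n) = {x}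

/-- A topological space is completely metrizable if its topology is induced by a
complete metric. -/
def IsCompletelyMetrizable (Y : Type*) [t : TopologicalSpace Y] : Prop :=
  ∃ m : MetricSpace Y, m.toUniformSpace.toTopologicalSpace = t ∧
    @CompleteSpace Y m.toUniformSpace

end BMtop

/-!
In a complete metric space Odd answers Eve's move `U` by an open ball `W` with
`closure W ⊆ U` and `ediam W ≤ min 1 (ediam U / 2)`. This rule looks only at Eve's last move,
yet, as the moves decrease, it bounds the diameter of Odd's `k`-th move by `2⁻¹ ^ k`; points
chosen in his moves form a Cauchy sequence whose limit lies in the closure of each of his moves,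
hence in every move. If `G` is dense in `X`, the traces on `G` of a play in `X` form a play in
`G`, so a stationary winning strategy of `G`, transported to open sets of `X` with the
prescribed traces, wins in `X`.
-/

open Set Filter Metric
open scoped ENNReal

def TopOddStationaryWins (X : Type*) [TopologicalSpace X] : Prop :=
  ∃ s : Set X → Set X,
    (∀ U : Set X, IsOpen U → U.Nonempty → IsOpen (s U) ∧ (s U).Nonempty ∧ s U ⊆ U) ∧
    ∀ U : ℕ → Set X, TopPlay U → (∀ k : ℕ, U (2 * k + 1) = s (U (2 * k))) →
      (⋂ n, U n).Nonempty

namespace TopOddStationaryWins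

variable {X : Type*} [TopologicalSpace X]

theorem of_forall_exists (R : Set X → Set X → Prop)
    (hR : ∀ U, IsOpen U → U.Nonempty → ∃ W, IsOpen W ∧ W.Nonempty ∧ W ⊆ U ∧ R U W)
    (hwin : ∀ U : ℕ → Set X, TopPlay U → (∀ k, R (U (2 * k)) (U (2 * k + 1))) →
      (⋂ n, U n).Nonempty) :
    TopOddStationaryWins X := by
  choose! s hs using hR
  refine ⟨s, fun U hU hne => (hs U hU hne).imp_right fun h => ⟨h.1, h.2.1⟩, ?_⟩
  intro U hU hfollow
  refine hwin U hU fun k => ?_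
  rw [hfollow k]
  exact (hs _ (hU.1 _) (hU.2.1 _)).2.2.2

theorem of_dense {G : Set X} (hG : Dense G) (hGwin : TopOddStationaryWins G) :
    TopOddStationaryWins X := by
  obtain ⟨t, ht, htwin⟩ := hGwin
  have trace_nonempty : ∀ U : Set X, IsOpen U → U.Nonempty → ((↑) ⁻¹' U : Set G).Nonempty :=
    fun U hU hne => hG.denseRange_val.exists_mem_open hU hne
  refine of_forall_exists (fun U W => ((↑) ⁻¹' W : Set G) = t ((↑) ⁻¹' U)) ?_ ?_
  · intro U hU hne
    obtain ⟨ht_open, ⟨g, hg⟩, ht_sub⟩ :=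
      ht _ (hU.preimage continuous_subtype_val) (trace_nonempty U hU hne)
    obtain ⟨V, hV, hVt⟩ := isOpen_induced_iff.mp ht_open
    refine ⟨U ∩ V, hU.inter hV, ⟨g, ht_sub hg, hVt.symm.subset hg⟩, inter_subset_left, ?_⟩
    rw [preimage_inter, hVt, inter_eq_right.2 ht_sub]
  · intro U ⟨hU_open, hU_ne, hU_succ⟩ hfollow
    have hplay : TopPlay fun n => ((↑) ⁻¹' U n : Set G) :=
      ⟨fun n => (hU_open n).preimage continuous_subtype_val,
        fun n => trace_nonempty _ (hU_open n) (hU_ne n),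
        fun n => preimage_mono (hU_succ n)⟩
    obtain ⟨g, hg⟩ := htwin _ hplay hfollow
    exact ⟨g, mem_iInter.2 fun n => mem_iInter.1 hg n⟩

end TopOddStationaryWins

section PseudoEMetricSpace

variable {Y : Type*} [PseudoEMetricSpace Y]

theorem nonempty_iInter_closure_of_ediam_le_inv_two_pow [CompleteSpace Y] {s : ℕ → Set Y}
    (hs : Antitone s) (hne : ∀ n, (s n).Nonempty) (hdiam : ∀ n, ediam (s n) ≤ 2⁻¹ ^ n) :
    (⋂ n, closure (s n)).Nonempty := by
  choose x hx using hne
  have hcauchy : CauchySeq x := by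
    refine cauchySeq_of_edist_le_geometric_two 1 ENNReal.one_ne_top fun n => ?_
    rw [one_div, ENNReal.inv_pow]
    exact (edist_le_ediam_of_mem (hx n) (hs n.le_succ (hx (n + 1)))).trans (hdiam n)
  obtain ⟨a, ha⟩ := cauchySeq_tendsto_of_complete hcauchy
  exact ⟨a, mem_iInter.2 fun n =>
    mem_closure_of_tendsto ha ((eventually_ge_atTop n).mono fun m hm => hs hm (hx m))⟩

theorem exists_isOpen_closure_subset_ediam_le {U : Set Y} (hU : IsOpen U) (hne : U.Nonempty)
    {ε : ℝ≥0∞} (hε : 0 < ε) :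
    ∃ W, IsOpen W ∧ W.Nonempty ∧ closure W ⊆ U ∧ ediam W ≤ ε := by
  obtain ⟨x, hx⟩ := hne
  obtain ⟨r, hr, hrU⟩ := nhds_basis_closedEBall.mem_iff.1 (hU.mem_nhds hx)
  have hδ : 0 < min r (ε / 2) := lt_min hr (ENNReal.half_pos hε.ne')
  refine ⟨eball x (min r (ε / 2)), isOpen_eball, ⟨x, mem_eball_self hδ⟩, ?_, ?_⟩
  · refine (closure_minimal eball_subset_closedEBall isClosed_closedEBall).trans ?_
    exact (closedEBall_subset_closedEBall (min_le_left _ _)).trans hrU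
  · calc ediam (eball x (min r (ε / 2)))
        ≤ 2 * min r (ε / 2) := ediam_eball_le
      _ ≤ 2 * (ε / 2) := by gcongr; exact min_le_right _ _
      _ = ε := ENNReal.mul_div_cancel two_ne_zero ENNReal.ofNat_ne_top

theorem exists_isOpen_closure_subset_ediam_le_min_one_half {U : Set Y} (hU : IsOpen U)
    (hne : U.Nonempty) :
    ∃ W, IsOpen W ∧ W.Nonempty ∧ closure W ⊆ U ∧ ediam W ≤ min 1 (ediam U / 2) := by
  by_cases hU0 : ediam U = 0
  · obtain ⟨W, hW, hWne, hWU, -⟩ := exists_isOpen_closure_subset_ediam_le hU hne one_pos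
    refine ⟨W, hW, hWne, hWU, ?_⟩
    have : ediam W = 0 := le_antisymm (hU0 ▸ ediam_mono (subset_closure.trans hWU)) bot_le
    simp [this]
  · exact exists_isOpen_closure_subset_ediam_le hU hne
      (lt_min one_pos (ENNReal.half_pos hU0))

theorem TopPlay.nonempty_iInter_of_ediam_le_min_one_half [CompleteSpace Y] {U : ℕ → Set Y}
    (hU : TopPlay U)
    (hodd : ∀ k, closure (U (2 * k + 1)) ⊆ U (2 * k) ∧
      ediam (U (2 * k + 1)) ≤ min 1 (ediam (U (2 * k)) / 2)) :
    (⋂ n, U n).Nonempty := by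
  have hanti : Antitone U := antitone_nat_of_succ_le hU.2.2
  have hdiam : ∀ k, ediam (U (2 * k + 1)) ≤ 2⁻¹ ^ k := by
    intro k
    induction k with
    | zero => simpa using ((hodd 0).2.trans (min_le_left _ _))
    | succ k ih =>
      calc ediam (U (2 * (k + 1) + 1))
          ≤ ediam (U (2 * (k + 1))) / 2 := (hodd (k + 1)).2.trans (min_le_right _ _)
        _ ≤ ediam (U (2 * k + 1)) / 2 := by
          gcongr; exact hanti (by omega : 2 * k + 1 ≤ 2 * (k + 1))
        _ ≤ 2⁻¹ ^ k / 2 := by gcongr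
        _ = 2⁻¹ ^ (k + 1) := by rw [pow_succ, div_eq_mul_inv]
  have hodd_anti : Antitone fun k => U (2 * k + 1) :=
    fun a b hab => hanti (by omega : 2 * a + 1 ≤ 2 * b + 1)
  obtain ⟨a, ha⟩ :=
    nonempty_iInter_closure_of_ediam_le_inv_two_pow hodd_anti (fun k => hU.2.1 _) hdiam
  exact ⟨a, mem_iInter.2 fun n =>
    hanti (by omega : n ≤ 2 * n) ((hodd n).1 (mem_iInter.1 ha n))⟩

theorem TopOddStationaryWins.of_completeSpace [CompleteSpace Y] : TopOddStationaryWins Y := by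
  refine .of_forall_exists (fun U W => closure W ⊆ U ∧ ediam W ≤ min 1 (ediam U / 2))
    (fun U hU hne => ?_) fun U hU hodd => hU.nonempty_iInter_of_ediam_le_min_one_half hodd
  obtain ⟨W, hW, hWne, hWU, hWdiam⟩ := exists_isOpen_closure_subset_ediam_le_min_one_half hU hne
  exact ⟨W, hW, hWne, subset_closure.trans hWU, hWU, hWdiam⟩

end PseudoEMetricSpace

theorem TopOddStationaryWins.of_isCompletelyMetrizable {Y : Type*} [TopologicalSpace Y]
    (hY : IsCompletelyMetrizable Y) : TopOddStationaryWins Y := by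
  have : TopologicalSpace.IsCompletelyMetrizableSpace Y := ⟨hY⟩
  let := TopologicalSpace.upgradeIsCompletelyMetrizable Y
  exact .of_completeSpace

theorem odd_stationary_wins_of_dense_completely_metrizable_general {X : Type*}
    [TopologicalSpace X]
    (G : Set X) (hG : Dense G) (hGm : IsCompletelyMetrizable ↥G) :
    ∃ s : Set X → Set X,
      (∀ U : Set X, IsOpen U → U.Nonempty →
        IsOpen (s U) ∧ (s U).Nonempty ∧ s U ⊆ U) ∧
      ∀ U : ℕ → Set X, TopPlay U → (∀ k : ℕ, U (2 * k + 1) = s (U (2 * k))) →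
        (⋂ n, U n).Nonempty :=
  (TopOddStationaryWins.of_isCompletelyMetrizable hGm).of_dense hG

/-- If a nonempty metrizable space `X` contains a dense
completely metrizable subspace, then Odd has a stationary winning strategy in
the classical Banach–Mazur game `BM(X)`. -/
theorem odd_stationary_wins_of_dense_completely_metrizable {X : Type*}
    [TopologicalSpace X] [Nonempty X] [TopologicalSpace.MetrizableSpace X]
    (G : Set X) (hG : Dense G) (hGm : IsCompletelyMetrizable ↥G) :
    ∃ s : Set X → Set X,
      (∀ U : Set X, IsOpen U → U.Nonempty →
        IsOpen (s U) ∧ (s U).Nonempty ∧ s U ⊆ U) ∧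
      ∀ U : ℕ → Set X, TopPlay U → (∀ k : ℕ, U (2 * k + 1) = s (U (2 * k))) →
        (⋂ n, U n).Nonempty :=
  odd_stationary_wins_of_dense_completely_metrizable_general G hG hGm
end

section
/- Let X be a metrizable topological space. If Odd has a winning strategy in the classical Banach–Mazur game BM(X), then X contains a dense completely metrizable subspace. -/
/-!
Fix a compatible metric and a winning strategy `s` for Odd. Grow a tree of partial plays
following `s`: below a node at level `n`, Eve may play any open subset of the current position
of diameter at most `2⁻¹ ^ n`, and by Zorn we keep a maximal family of such moves whose answers
under `s` are pairwise disjoint. Odd's answers at level `n` then form a disjoint family of open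
sets whose union is dense, and every branch of the tree is a play following `s`, so its
intersection is nonempty. The points lying in the tree at every level form a dense set `G`,
partitioned at each level into open cells of diameter at most `2⁻¹ ^ n` in which every nested
chain of cells meets `G`. Adding to the distance a penalty `2⁻¹ ^ n` for every level at which two
points lie in different cells gives a complete metric on `G` inducing its topology.
-/

open Set Filter Topology

theorem exists_pairwiseDisjoint_maximal {ι α : Type*} (A : Set ι) (f : ι → Set α) :
    ∃ C ⊆ A, C.PairwiseDisjoint f ∧ ∀ i ∈ A, (f i).Nonempty → ∃ j ∈ C, (f i ∩ f j).Nonempty := by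
  obtain ⟨C, ⟨hCA, hC⟩, hmax⟩ := zorn_subset {C | C ⊆ A ∧ C.PairwiseDisjoint f}
    fun K hK hchain => ⟨⋃₀ K, ⟨sUnion_subset fun C hC => (hK hC).1,
      (pairwiseDisjoint_sUnion hchain.directedOn).2 fun C hC => (hK hC).2⟩,
      fun _ => subset_sUnion_of_mem⟩
  refine ⟨C, hCA, hC, fun i hiA hi => ?_⟩
  by_cases hiC : i ∈ C
  · exact ⟨i, hiC, by rwa [inter_self]⟩
  by_contra! hdisj
  have hins : insert i C ∈ {C | C ⊆ A ∧ C.PairwiseDisjoint f} :=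
    ⟨insert_subset hiA hCA, hC.insert fun j hj _ => disjoint_iff_inter_eq_empty.2 (hdisj j hj)⟩
  exact hiC (hmax hins (subset_insert i C) (mem_insert i C))

lemma eqOn_diag_of_eqOn_succ {β : Type*} {u : ℕ → ℕ → β} {g : ℕ → ℕ} (hg : Monotone g)
    (hlt : ∀ i, i < g i) (h : ∀ n, EqOn (u (n + 1)) (u n) (Iio (g n))) (n : ℕ) :
    EqOn (fun i => u i i) (u n) (Iio (g n)) := by
  have hle : ∀ m n, m ≤ n → EqOn (u n) (u m) (Iio (g m)) := by
    intro m n hmn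
    induction n, hmn using Nat.le_induction with
    | base => exact eqOn_refl _ _
    | succ n hmn ih => exact ((h n).mono (Iio_subset_Iio (hg hmn))).trans ih
  intro i hi
  rcases le_total i n with hin | hni
  · exact (hle i n hin (hlt i)).symm
  · exact hle n i hni hi

lemma exists_seq_of_exists_succ {α : Type*} {P : ℕ → α → Prop} {R : ℕ → α → α → Prop}
    (h₀ : ∃ a, P 0 a) (h : ∀ n a, P n a → ∃ b, P (n + 1) b ∧ R n b a) :
    ∃ f : ℕ → α, ∀ n, P n (f n) ∧ R n (f (n + 1)) (f n) := by
  obtain ⟨a, ha⟩ := h₀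
  choose! g hg using h
  let f : ℕ → α := fun n => Nat.rec a g n
  have hf : ∀ n, P n (f n) := fun n => Nat.rec ha (fun n ih => (hg n _ ih).1) n
  exact ⟨f, fun n => ⟨hf n, (hg n _ (hf n)).2⟩⟩

section NestedPartitions

variable {Y : Type*}

open Classical in
noncomputable def cellPenalty (c : ℕ → Y → Set Y) (x y : Y) (n : ℕ) : ℝ :=
  if c n x = c n y then 0 else (2⁻¹ : ℝ) ^ n

variable {c : ℕ → Y → Set Y}

lemma cellPenalty_nonneg (x y : Y) (n : ℕ) : 0 ≤ cellPenalty c x y n := by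
  unfold cellPenalty; split_ifs <;> positivity

lemma summable_cellPenalty (x y : Y) : Summable (cellPenalty c x y) :=
  .of_nonneg_of_le (cellPenalty_nonneg x y) (fun n => by unfold cellPenalty; split_ifs <;> simp)
    summable_geometric_two

lemma cellPenalty_comm (x y : Y) : cellPenalty c x y = cellPenalty c y x := by
  funext n; simp only [cellPenalty, eq_comm]

lemma cellPenalty_triangle (x y z : Y) (n : ℕ) :
    cellPenalty c x z n ≤ cellPenalty c x y n + cellPenalty c y z n := by
  unfold cellPenalty; split_ifs <;> first | positivity | simp_all

structure IsNestedOpenPartition [TopologicalSpace Y] (c : ℕ → Y → Set Y) : Prop where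
  mem_nhds : ∀ n x, c n x ∈ 𝓝 x
  eq_of_mem : ∀ n x, ∀ y ∈ c n x, c n y = c n x
  succ_subset : ∀ n x, c (n + 1) x ⊆ c n x

variable [MetricSpace Y] (c)

noncomputable def cellDist (x y : Y) : ℝ :=
  dist x y + ∑' n, cellPenalty c x y n

variable {c}

lemma dist_le_cellDist (x y : Y) : dist x y ≤ cellDist c x y :=
  le_add_of_nonneg_right <| tsum_nonneg <| cellPenalty_nonneg x y

lemma cellDist_comm (x y : Y) : cellDist c x y = cellDist c y x := by
  rw [cellDist, cellDist, dist_comm, cellPenalty_comm]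

lemma cellDist_triangle (x y z : Y) : cellDist c x z ≤ cellDist c x y + cellDist c y z := by
  have hsum := (summable_cellPenalty (c := c) x y).tsum_add (summable_cellPenalty (c := c) y z)
  have hle := (summable_cellPenalty (c := c) x z).tsum_le_tsum (cellPenalty_triangle x y z)
    ((summable_cellPenalty x y).add (summable_cellPenalty y z))
  simp only [cellDist]
  linarith [dist_triangle x y z]

lemma pow_le_cellDist {n : ℕ} {x y : Y} (h : c n x ≠ c n y) : (2⁻¹ : ℝ) ^ n ≤ cellDist c x y :=
  calc (2⁻¹ : ℝ) ^ n = cellPenalty c x y n := (if_neg h).symm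
    _ ≤ ∑' m, cellPenalty c x y m :=
        (summable_cellPenalty x y).le_tsum n fun m _ => cellPenalty_nonneg x y m
    _ ≤ cellDist c x y := le_add_of_nonneg_left dist_nonneg

lemma cellDist_le {n : ℕ} {x y : Y} (h : ∀ m ≤ n, c m x = c m y) :
    cellDist c x y ≤ dist x y + (2⁻¹ : ℝ) ^ n := by
  have hle : ∀ m, cellPenalty c x y m ≤ if n + 1 ≤ m then (2⁻¹ : ℝ) ^ m else 0 := fun m => by
    by_cases hm : n + 1 ≤ m
    · rw [if_pos hm, cellPenalty]; split_ifs <;> first | positivity | rfl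
    · rw [if_neg hm, cellPenalty, if_pos (h m (by omega))]
  have htail : Summable fun m => if n + 1 ≤ m then (2⁻¹ : ℝ) ^ m else 0 :=
    .of_nonneg_of_le (fun m => by split_ifs <;> positivity) (fun m => by split_ifs <;> simp)
      summable_geometric_two
  have htail_eq : ∑' m, (if n + 1 ≤ m then (2⁻¹ : ℝ) ^ m else 0) = 2⁻¹ ^ n := by
    rw [tsum_geometric_inv_two_ge, pow_succ]; ring
  unfold cellDist
  linarith [(summable_cellPenalty x y).tsum_le_tsum hle htail]

lemma IsNestedOpenPartition.eq_of_le (hc : IsNestedOpenPartition c) {m n : ℕ} (hmn : m ≤ n)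
    {x y : Y} (h : c n x = c n y) : c m x = c m y := by
  have hy : y ∈ c n x := h ▸ mem_of_mem_nhds (hc.mem_nhds n y)
  have hy : y ∈ c m x := antitone_nat_of_succ_le (f := (c · x)) (hc.succ_subset · x) hmn hy
  exact (hc.eq_of_mem m x y hy).symm

lemma isOpen_iff_cellDist (hc : IsNestedOpenPartition c) (U : Set Y) :
    IsOpen U ↔ ∀ x ∈ U, ∃ ε > 0, ∀ y, cellDist c x y < ε → y ∈ U := by
  refine Metric.isOpen_iff.trans (forall₂_congr fun x _ => ⟨?_, ?_⟩)
  · rintro ⟨ε, hε, hball⟩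
    exact ⟨ε, hε, fun y hy => hball <| by
      rw [Metric.mem_ball, dist_comm]; exact (dist_le_cellDist x y).trans_lt hy⟩
  · rintro ⟨ε, hε, hU⟩
    obtain ⟨n, hn⟩ := exists_pow_lt_of_lt_one (half_pos hε) (by norm_num : (2⁻¹ : ℝ) < 1)
    obtain ⟨δ, hδ, hδc⟩ := Metric.mem_nhds_iff.1 (hc.mem_nhds n x)
    refine ⟨min δ (ε / 2), lt_min hδ (half_pos hε), fun y hy => hU y ?_⟩
    rw [Metric.mem_ball, dist_comm] at hy
    have hxy : c n x = c n y :=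
      (hc.eq_of_mem n x y (hδc (Metric.mem_ball'.2 (hy.trans_le (min_le_left _ _))))).symm
    calc cellDist c x y ≤ dist x y + (2⁻¹ : ℝ) ^ n :=
          cellDist_le fun m hm => hc.eq_of_le hm hxy
      _ < ε / 2 + ε / 2 := add_lt_add_of_lt_of_lt (hy.trans_le (min_le_right _ _)) hn
      _ = ε := add_halves ε

theorem TopologicalSpace.IsCompletelyMetrizableSpace.of_isNestedOpenPartition
    (hc : IsNestedOpenPartition c) (hdist : ∀ n x, ∀ y ∈ c n x, dist x y ≤ (2⁻¹ : ℝ) ^ n)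
    (hchain : ∀ u : ℕ → Y, (∀ n, u (n + 1) ∈ c n (u n)) → ∃ y, ∀ n, y ∈ c n (u n)) :
    TopologicalSpace.IsCompletelyMetrizableSpace Y := by
  refine ⟨.ofDistTopology (cellDist c) (fun x => by simp [cellDist, cellPenalty]) cellDist_comm
    cellDist_triangle (isOpen_iff_cellDist hc)
    (fun x y h => dist_le_zero.1 (h ▸ dist_le_cellDist x y)), rfl, ?_⟩
  refine @Metric.complete_of_convergent_controlled_sequences Y ?_ (fun n => (2⁻¹ : ℝ) ^ n)
    (fun n => by positivity) fun u hu => ?_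
  -- `hu` is stated for the new metric, whose distance is `cellDist c`.
  replace hu : ∀ N n k, N ≤ n → N ≤ k → cellDist c (u n) (u k) < (2⁻¹ : ℝ) ^ N := hu
  have hsame : ∀ n k, n ≤ k → c n (u k) = c n (u n) := fun n k hk => by
    by_contra hne
    exact (hu n k n hk le_rfl).not_ge (pow_le_cellDist hne)
  obtain ⟨y, hy⟩ := hchain u fun n => by
    rw [← hsame n (n + 1) n.le_succ]; exact mem_of_mem_nhds (hc.mem_nhds n _)
  refine ⟨y, show Tendsto u atTop (𝓝 y) from Metric.tendsto_atTop.2 fun ε hε => ?_⟩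
  obtain ⟨n, hn⟩ := exists_pow_lt_of_lt_one (half_pos hε) (by norm_num : (2⁻¹ : ℝ) < 1)
  refine ⟨n, fun k hk => ?_⟩
  have huk : u k ∈ c n (u n) := hsame n k hk ▸ mem_of_mem_nhds (hc.mem_nhds n _)
  calc dist (u k) y ≤ dist (u n) (u k) + dist (u n) y := dist_triangle_left _ _ _
    _ ≤ (2⁻¹ : ℝ) ^ n + (2⁻¹ : ℝ) ^ n := add_le_add (hdist n _ _ huk) (hdist n _ _ (hy n))
    _ < ε := by linarith

end NestedPartitions

section PartialPlays

variable {X : Type*} [TopologicalSpace X]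

def IsPartialPlay (k : ℕ) (u : ℕ → Set X) : Prop :=
  ∀ j < k, IsOpen (u j) ∧ (u j).Nonempty ∧ ∀ i < j, u j ⊆ u i

namespace IsPartialPlay

variable {k : ℕ} {u v : ℕ → Set X}

lemma succ (h : IsPartialPlay k u) (ho : IsOpen (u k)) (hne : (u k).Nonempty)
    (hsub : u k ⊆ ⋂ i ∈ Iio k, u i) : IsPartialPlay (k + 1) u := by
  intro j hj
  rcases (Nat.lt_succ_iff.1 hj).lt_or_eq with hj | rfl
  · exact h j hj
  · exact ⟨ho, hne, fun i hi => hsub.trans (biInter_subset_of_mem hi)⟩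

lemma congr (h : IsPartialPlay k u) (huv : EqOn u v (Iio k)) : IsPartialPlay k v := by
  intro j hj
  obtain ⟨ho, hne, hsub⟩ := h j hj
  rw [← huv hj]
  exact ⟨ho, hne, fun i hi => huv (hi.trans hj) ▸ hsub i hi⟩

lemma mono {l : ℕ} (h : IsPartialPlay l u) (hkl : k ≤ l) : IsPartialPlay k u :=
  fun j hj => h j (hj.trans_le hkl)

lemma subset (h : IsPartialPlay k u) {i j : ℕ} (hij : i ≤ j) (hj : j < k) : u j ⊆ u i := by
  rcases hij.lt_or_eq with hij | rfl
  · exact (h j hj).2.2 i hij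
  · exact subset_rfl

lemma biInter_eq (h : IsPartialPlay (k + 1) u) : ⋂ i ∈ Iio (k + 1), u i = u k :=
  Subset.antisymm (biInter_subset_of_mem (mem_Iio.2 k.lt_succ_self))
    (subset_iInter₂ fun _ hi => h.subset (Nat.lt_succ_iff.1 hi) k.lt_succ_self)

lemma isOpen_biInter (h : IsPartialPlay k u) : IsOpen (⋂ i ∈ Iio k, u i) :=
  (finite_Iio k).isOpen_biInter fun i hi => (h i hi).1

lemma update (h : IsPartialPlay k u) {V : Set X} (ho : IsOpen V) (hne : V.Nonempty)
    (hsub : V ⊆ ⋂ i ∈ Iio k, u i) : IsPartialPlay (k + 1) (Function.update u k V) := by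
  have heq : EqOn u (Function.update u k V) (Iio k) := fun i hi =>
    (Function.update_of_ne (mem_Iio.1 hi).ne V u).symm
  have hinter : ⋂ i ∈ Iio k, u i = ⋂ i ∈ Iio k, Function.update u k V i :=
    iInter₂_congr fun _ hi => heq hi
  refine (h.congr heq).succ ?_ ?_ ?_ <;> rw [Function.update_self]
  exacts [ho, hne, hinter ▸ hsub]

lemma topPartialPlay (h : IsPartialPlay k u) : TopPartialPlay fun i : Fin k => u i :=
  ⟨fun i => (h i i.2).1, fun i => (h i i.2).2.1, fun _ j hij => h.subset hij j.2⟩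

lemma topPlay (h : ∀ k, IsPartialPlay k u) : TopPlay u :=
  ⟨fun n => (h (n + 1) n n.lt_succ_self).1, fun n => (h (n + 1) n n.lt_succ_self).2.1,
    fun n => (h (n + 2) (n + 1) (by omega)).2.2 n n.lt_succ_self⟩

end IsPartialPlay

def TopOddStrategy.IsWinning (s : TopOddStrategy X) : Prop :=
  ∀ U : ℕ → Set X, TopPlay U → TopOddFollows U s → (⋂ n, U n).Nonempty

end PartialPlays

section StrategyTree

variable {X : Type*} (s : TopOddStrategy X)

def oddReply (n : ℕ) (u : ℕ → Set X) (V : Set X) : Set X :=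
  s n fun i => Function.update u (2 * n) V i

lemma oddReply_congr {n : ℕ} {u v : ℕ → Set X} (h : EqOn u v (Iio (2 * n))) :
    oddReply s n u = oddReply s n v := by
  funext V
  refine congrArg (s n) (funext fun i => ?_)
  rcases eq_or_ne (i : ℕ) (2 * n) with hi | hi
  · simp only [hi, Function.update_self]
  · simp only [Function.update_of_ne hi]
    exact h (show (i : ℕ) < 2 * n by omega)

variable [MetricSpace X]

def eveAllowed (n : ℕ) (P : Set X) : Set (Set X) :=
  {V | IsOpen V ∧ V.Nonempty ∧ V ⊆ P ∧ ∀ x ∈ V, ∀ y ∈ V, dist x y ≤ (2⁻¹ : ℝ) ^ n}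

lemma eveAllowed_mono {n : ℕ} {P Q : Set X} (h : P ⊆ Q) : eveAllowed n P ⊆ eveAllowed n Q :=
  fun _ ⟨ho, hne, hsub, hdist⟩ => ⟨ho, hne, hsub.trans h, hdist⟩

lemma eveAllowed_nonempty (n : ℕ) {P : Set X} (ho : IsOpen P) (hne : P.Nonempty) :
    (eveAllowed n P).Nonempty := by
  obtain ⟨x, hx⟩ := hne
  obtain ⟨ε, hε, hball⟩ := Metric.isOpen_iff.1 ho x hx
  set r := min ε ((2⁻¹ : ℝ) ^ (n + 1))
  have hr : 0 < r := lt_min hε (by positivity)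
  have hr' : r ≤ (2⁻¹ : ℝ) ^ (n + 1) := min_le_right _ _
  refine ⟨Metric.ball x r, Metric.isOpen_ball, Metric.nonempty_ball.2 hr,
    (Metric.ball_subset_ball (min_le_left _ _)).trans hball, fun y hy z hz => ?_⟩
  calc dist y z ≤ dist y x + dist z x := dist_triangle_right _ _ _
    _ ≤ 2 * (2⁻¹ : ℝ) ^ (n + 1) := by
        linarith [Metric.mem_ball.1 hy, Metric.mem_ball.1 hz]
    _ = (2⁻¹ : ℝ) ^ n := by rw [pow_succ]; ring

noncomputable def eveMoves (n : ℕ) (u : ℕ → Set X) : Set (Set X) :=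
  (exists_pairwiseDisjoint_maximal (eveAllowed n (⋂ i ∈ Iio (2 * n), u i))
    (oddReply s n u)).choose

lemma eveMoves_spec (n : ℕ) (u : ℕ → Set X) :
    eveMoves s n u ⊆ eveAllowed n (⋂ i ∈ Iio (2 * n), u i) ∧
      (eveMoves s n u).PairwiseDisjoint (oddReply s n u) ∧
      ∀ V ∈ eveAllowed n (⋂ i ∈ Iio (2 * n), u i), (oddReply s n u V).Nonempty →
        ∃ W ∈ eveMoves s n u, (oddReply s n u V ∩ oddReply s n u W).Nonempty :=
  (exists_pairwiseDisjoint_maximal _ _).choose_spec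

lemma eveMoves_congr {n : ℕ} {u v : ℕ → Set X} (h : EqOn u v (Iio (2 * n))) :
    eveMoves s n u = eveMoves s n v := by
  have hinter : ⋂ i ∈ Iio (2 * n), u i = ⋂ i ∈ Iio (2 * n), v i :=
    iInter₂_congr fun _ hi => h hi
  simp only [eveMoves, hinter, oddReply_congr s h]

def IsStep (n : ℕ) (u : ℕ → Set X) : Prop :=
  u (2 * n) ∈ eveMoves s n u ∧ u (2 * n + 1) = oddReply s n u (u (2 * n))

-- A node of level `n` is a sequence whose first `2 * n + 2` terms form a play following `s` in
-- which Eve's `m`-th move `u (2 * m)` is taken from `eveMoves s m u`; later terms are irrelevant.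
def strategyTree (n : ℕ) : Set (ℕ → Set X) :=
  {u | ∀ m ≤ n, IsStep s m u}

def strategyCore : Set X :=
  {x | ∀ n, ∃ u ∈ strategyTree s n, x ∈ u (2 * n + 1)}

-- For `x ∈ strategyCore s`, the unique answer of Odd at level `n` containing `x`
-- (`strategyCell_eq`).
def strategyCell (n : ℕ) (x : X) : Set X :=
  ⋃ u ∈ {u | u ∈ strategyTree s n ∧ x ∈ u (2 * n + 1)}, u (2 * n + 1)

variable {s}

lemma IsStep.congr {n : ℕ} {u v : ℕ → Set X} (hu : IsStep s n u)
    (h : EqOn u v (Iio (2 * n + 2))) : IsStep s n v := by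
  have h' : EqOn u v (Iio (2 * n)) := h.mono (Iio_subset_Iio (by omega))
  obtain ⟨hmove, hreply⟩ := hu
  refine ⟨?_, ?_⟩
  · rw [← h (show 2 * n < 2 * n + 2 by omega), ← eveMoves_congr s h']
    exact hmove
  · rw [← h (show 2 * n + 1 < 2 * n + 2 by omega), ← h (show 2 * n < 2 * n + 2 by omega),
      ← oddReply_congr s h']
    exact hreply

lemma mem_strategyTree_of_eqOn {n : ℕ} {u v : ℕ → Set X} (hu : u ∈ strategyTree s n)
    (h : EqOn u v (Iio (2 * n + 2))) : v ∈ strategyTree s n :=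
  fun m hm => (hu m hm).congr (h.mono (Iio_subset_Iio (by omega)))

lemma oddReply_spec (hs : TopOddValid s) {n : ℕ} {u : ℕ → Set X} (hu : IsPartialPlay (2 * n) u)
    {V : Set X} (hV : V ∈ eveAllowed n (⋂ i ∈ Iio (2 * n), u i)) :
    IsOpen (oddReply s n u V) ∧ (oddReply s n u V).Nonempty ∧ oddReply s n u V ⊆ V := by
  obtain ⟨ho, hne, hsub⟩ := hs n _ (hu.update hV.1 hV.2.1 hV.2.2.1).topPartialPlay
  refine ⟨ho, hne, hsub.trans ?_⟩
  simp

lemma isPartialPlay_of_isStep (hs : TopOddValid s) {n : ℕ} {u : ℕ → Set X}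
    (hu : ∀ m < n, IsStep s m u) : IsPartialPlay (2 * n) u := by
  induction n with
  | zero => exact fun j hj => absurd hj (Nat.not_lt_zero j)
  | succ n ih =>
    have hpp := ih fun m hm => hu m (hm.trans n.lt_succ_self)
    obtain ⟨hmove, hreply⟩ := hu n n.lt_succ_self
    have hV := (eveMoves_spec s n u).1 hmove
    have hpp' : IsPartialPlay (2 * n + 1) u := by
      simpa using hpp.update hV.1 hV.2.1 hV.2.2.1
    obtain ⟨ho, hne, hsub⟩ := oddReply_spec hs hpp hV
    rw [← hreply] at ho hne hsub
    exact hpp'.succ ho hne (hpp'.biInter_eq ▸ hsub)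

lemma isPartialPlay_of_mem_strategyTree (hs : TopOddValid s) {n : ℕ} {u : ℕ → Set X}
    (hu : u ∈ strategyTree s n) : IsPartialPlay (2 * n + 2) u :=
  isPartialPlay_of_isStep hs (n := n + 1) fun m hm => hu m (Nat.lt_succ_iff.1 hm)

lemma dist_le_of_mem_strategyTree (hs : TopOddValid s) {n : ℕ} {u : ℕ → Set X}
    (hu : u ∈ strategyTree s n) {x y : X} (hx : x ∈ u (2 * n + 1)) (hy : y ∈ u (2 * n + 1)) :
    dist x y ≤ (2⁻¹ : ℝ) ^ n := by
  have hsub := (isPartialPlay_of_mem_strategyTree hs hu).subset (2 * n).le_succ (by omega)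
  exact ((eveMoves_spec s n u).1 (hu n le_rfl).1).2.2.2 x (hsub hx) y (hsub hy)

lemma IsStep.eqOn {n : ℕ} {u v : ℕ → Set X} (hu : IsStep s n u) (hv : IsStep s n v)
    (h : EqOn u v (Iio (2 * n))) (hne : (u (2 * n + 1) ∩ v (2 * n + 1)).Nonempty) :
    EqOn u v (Iio (2 * n + 2)) := by
  have hmove : u (2 * n) = v (2 * n) := by
    by_contra hne'
    have hv' : v (2 * n) ∈ eveMoves s n u := eveMoves_congr s h ▸ hv.1
    have hdisj : Disjoint (oddReply s n u (u (2 * n))) (oddReply s n u (v (2 * n))) :=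
      (eveMoves_spec s n u).2.1 hu.1 hv' hne'
    rw [← hu.2, oddReply_congr s h, ← hv.2] at hdisj
    obtain ⟨z, hzu, hzv⟩ := hne
    exact disjoint_left.1 hdisj hzu hzv
  have hreply : u (2 * n + 1) = v (2 * n + 1) := by
    rw [hu.2, hv.2, hmove, oddReply_congr s h]
  intro i hi
  obtain hi | rfl | rfl : i < 2 * n ∨ i = 2 * n ∨ i = 2 * n + 1 := by
    simp only [mem_Iio] at hi; omega
  exacts [h hi, hmove, hreply]

lemma eqOn_of_mem_strategyTree (hs : TopOddValid s) {n : ℕ} {u v : ℕ → Set X}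
    (hu : u ∈ strategyTree s n) (hv : v ∈ strategyTree s n)
    (hne : (u (2 * n + 1) ∩ v (2 * n + 1)).Nonempty) : EqOn u v (Iio (2 * n + 2)) := by
  have hne' : ∀ m ≤ n, (u (2 * m + 1) ∩ v (2 * m + 1)).Nonempty := fun m hm =>
    hne.mono <| inter_subset_inter
      ((isPartialPlay_of_mem_strategyTree hs hu).subset (by omega) (by omega))
      ((isPartialPlay_of_mem_strategyTree hs hv).subset (by omega) (by omega))
  suffices ∀ m ≤ n, EqOn u v (Iio (2 * m + 2)) from this n le_rfl
  intro m hm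
  induction m with
  | zero =>
    exact (hu 0 hm).eqOn (hv 0 hm) (fun i hi => absurd hi (Nat.not_lt_zero i)) (hne' 0 hm)
  | succ m ih => exact (hu _ hm).eqOn (hv _ hm) (ih (by omega)) (hne' _ hm)

lemma nonempty_iInter_of_isStep (hs : TopOddValid s) (hwin : s.IsWinning) {w : ℕ → Set X}
    (hw : ∀ n, IsStep s n w) : (⋂ i, w i).Nonempty := by
  refine hwin w (IsPartialPlay.topPlay fun k => ?_) fun k => ?_
  · exact (isPartialPlay_of_isStep hs (n := k) fun m _ => hw m).mono (by omega)
  · rw [(hw k).2, oddReply, Function.update_eq_self]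

lemma exists_mem_strategyCore_of_eqOn (hs : TopOddValid s) (hwin : s.IsWinning)
    {u : ℕ → ℕ → Set X} (hu : ∀ n, u n ∈ strategyTree s n)
    (hcoh : ∀ n, EqOn (u (n + 1)) (u n) (Iio (2 * n + 2))) :
    ∃ x ∈ strategyCore s, ∀ n, x ∈ u n (2 * n + 1) := by
  have hw := eqOn_diag_of_eqOn_succ (g := fun n => 2 * n + 2) (fun a b h => by dsimp only; omega)
    (fun i => by omega) hcoh
  have hwT : ∀ n, (fun i => u i i) ∈ strategyTree s n :=
    fun n => mem_strategyTree_of_eqOn (hu n) (hw n).symm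
  obtain ⟨x, hx⟩ := nonempty_iInter_of_isStep hs hwin fun n => hwT n n le_rfl
  have hxw : ∀ i, x ∈ u i i := mem_iInter.1 hx
  exact ⟨x, fun n => ⟨_, hwT n, hxw _⟩,
    fun n => hw n (show 2 * n + 1 < 2 * n + 2 by omega) ▸ hxw (2 * n + 1)⟩

lemma exists_extension_mem_strategyTree (hs : TopOddValid s) {n : ℕ} {u : ℕ → Set X}
    (hu : ∀ m < n, IsStep s m u) {W : Set X} (hW : IsOpen W)
    (hWu : (W ∩ ⋂ i ∈ Iio (2 * n), u i).Nonempty) :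
    ∃ v ∈ strategyTree s n, EqOn v u (Iio (2 * n)) ∧ (W ∩ v (2 * n + 1)).Nonempty := by
  have hpp := isPartialPlay_of_isStep hs hu
  obtain ⟨V, hV⟩ := eveAllowed_nonempty n (hW.inter hpp.isOpen_biInter) hWu
  have hV' := eveAllowed_mono inter_subset_right hV
  obtain ⟨-, hRne, hRV⟩ := oddReply_spec hs hpp hV'
  obtain ⟨V', hV'm, hmeet⟩ := (eveMoves_spec s n u).2.2 V hV' hRne
  set v := Function.update (Function.update u (2 * n) V') (2 * n + 1) (oddReply s n u V')
  have hvu : EqOn v u (Iio (2 * n)) := fun i hi => by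
    simp only [mem_Iio] at hi
    simp only [v, Function.update_of_ne (show i ≠ 2 * n + 1 by omega),
      Function.update_of_ne (show i ≠ 2 * n by omega)]
  have hv2 : v (2 * n) = V' := by simp [v]
  have hv3 : v (2 * n + 1) = oddReply s n u V' := by simp [v]
  have hstep : IsStep s n v := by
    refine ⟨?_, ?_⟩
    · rw [hv2, eveMoves_congr s hvu]; exact hV'm
    · rw [hv3, hv2, oddReply_congr s hvu]
  refine ⟨v, fun m hm => ?_, hvu, ?_⟩
  · rcases hm.lt_or_eq with hm | rfl
    · exact (hu m hm).congr (hvu.symm.mono (Iio_subset_Iio (by omega)))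
    · exact hstep
  · obtain ⟨z, hzR, hzR'⟩ := hmeet
    exact ⟨z, (hV.2.2.1 (hRV hzR)).1, hv3 ▸ hzR'⟩

lemma exists_coherent_nodes_meeting (hs : TopOddValid s) {W : Set X} (hW : IsOpen W)
    (hne : W.Nonempty) :
    ∃ u : ℕ → ℕ → Set X, ∀ n, (u n ∈ strategyTree s n ∧ (W ∩ u n (2 * n + 1)).Nonempty) ∧
      EqOn (u (n + 1)) (u n) (Iio (2 * n + 2)) := by
  refine exists_seq_of_exists_succ
    (P := fun n v => v ∈ strategyTree s n ∧ (W ∩ v (2 * n + 1)).Nonempty)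
    (R := fun n v' v => EqOn v' v (Iio (2 * n + 2))) ?_ fun n v ⟨hv, hWv⟩ => ?_
  · obtain ⟨u, hu, -, hWu⟩ := exists_extension_mem_strategyTree hs (n := 0)
      (u := fun _ => univ) (fun m hm => absurd hm (Nat.not_lt_zero m)) hW (by simpa using hne)
    exact ⟨u, hu, hWu⟩
  · obtain ⟨v', hv', hv'v, hWv'⟩ := exists_extension_mem_strategyTree hs (n := n + 1)
      (u := v) (fun m hm => hv m (Nat.lt_succ_iff.1 hm)) hW
      (show (W ∩ ⋂ i ∈ Iio (2 * n + 1 + 1), v i).Nonempty by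
        rwa [(isPartialPlay_of_mem_strategyTree hs hv).biInter_eq])
    exact ⟨v', ⟨hv', hWv'⟩, hv'v⟩

theorem dense_strategyCore (hs : TopOddValid s) (hwin : s.IsWinning) :
    Dense (strategyCore s) := by
  refine dense_iff_inter_open.2 fun W hW ⟨x₀, hx₀⟩ => ?_
  obtain ⟨ε, hε, hball⟩ := Metric.isOpen_iff.1 hW x₀ hx₀
  obtain ⟨N, hN⟩ := exists_pow_lt_of_lt_one (half_pos hε) (by norm_num : (2⁻¹ : ℝ) < 1)
  obtain ⟨u, hu⟩ := exists_coherent_nodes_meeting hs (W := Metric.ball x₀ ((2⁻¹ : ℝ) ^ N))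
    Metric.isOpen_ball (Metric.nonempty_ball.2 (by positivity))
  obtain ⟨x, hxG, hx⟩ :=
    exists_mem_strategyCore_of_eqOn hs hwin (fun n => (hu n).1.1) fun n => (hu n).2
  obtain ⟨z, hz₀, hz⟩ := (hu N).1.2
  refine ⟨x, hball ?_, hxG⟩
  calc dist x x₀ ≤ dist x z + dist z x₀ := dist_triangle _ _ _
    _ < (2⁻¹ : ℝ) ^ N + (2⁻¹ : ℝ) ^ N :=
        add_lt_add_of_le_of_lt (dist_le_of_mem_strategyTree hs (hu N).1.1 (hx N) hz) hz₀
    _ < ε := by linarith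

lemma strategyCell_eq (hs : TopOddValid s) {n : ℕ} {u : ℕ → Set X}
    (hu : u ∈ strategyTree s n) {x : X} (hx : x ∈ u (2 * n + 1)) :
    strategyCell s n x = u (2 * n + 1) := by
  refine Subset.antisymm (iUnion₂_subset fun v hv => ?_)
    (subset_biUnion_of_mem (u := fun v => v (2 * n + 1))
      (show u ∈ {u | u ∈ strategyTree s n ∧ x ∈ u (2 * n + 1)} from ⟨hu, hx⟩))
  obtain ⟨hv, hxv⟩ := hv
  rw [eqOn_of_mem_strategyTree hs hv hu ⟨x, hxv, hx⟩ (show 2 * n + 1 < 2 * n + 2 by omega)]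

theorem isCompletelyMetrizableSpace_strategyCore (hs : TopOddValid s) (hwin : s.IsWinning) :
    TopologicalSpace.IsCompletelyMetrizableSpace (strategyCore s) := by
  have hnode : ∀ (x : strategyCore s) n,
      ∃ u ∈ strategyTree s n, (x : X) ∈ u (2 * n + 1) ∧ strategyCell s n x = u (2 * n + 1) :=
    fun x n => by
      obtain ⟨u, hu, hx⟩ := x.2 n
      exact ⟨u, hu, hx, strategyCell_eq hs hu hx⟩
  refine .of_isNestedOpenPartition (c := fun n (x : strategyCore s) => (↑) ⁻¹' strategyCell s n x)
    ⟨fun n x => ?_, fun n x y hy => ?_, fun n x => ?_⟩ (fun n x y hy => ?_) fun x hx => ?_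
  · obtain ⟨u, hu, hxu, hc⟩ := hnode x n
    rw [hc]
    exact (((isPartialPlay_of_mem_strategyTree hs hu) _ (by omega)).1.preimage
      continuous_subtype_val).mem_nhds hxu
  · obtain ⟨u, hu, -, hc⟩ := hnode x n
    rw [mem_preimage, hc] at hy
    simp only [hc, strategyCell_eq hs hu hy]
  · obtain ⟨u, hu, hxu, hc⟩ := hnode x (n + 1)
    have hsub : u (2 * (n + 1) + 1) ⊆ u (2 * n + 1) :=
      (isPartialPlay_of_mem_strategyTree hs hu).subset (by omega) (by omega)
    simp only [hc, strategyCell_eq hs (fun m hm => hu m (by omega)) (hsub hxu)]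
    exact preimage_mono hsub
  · obtain ⟨u, hu, hxu, hc⟩ := hnode x n
    rw [mem_preimage, hc] at hy
    exact dist_le_of_mem_strategyTree hs hu hxu hy
  · choose u hu hxu hc using hnode
    have hcoh : ∀ n, EqOn (u (x (n + 1)) (n + 1)) (u (x n) n) (Iio (2 * n + 2)) := by
      intro n
      have hx' : (x (n + 1) : X) ∈ u (x n) n (2 * n + 1) := hc (x n) n ▸ hx n
      refine eqOn_of_mem_strategyTree hs (fun m hm => hu _ _ m (by omega)) (hu _ _)
        ⟨_, (isPartialPlay_of_mem_strategyTree hs (hu _ _)).subset (by omega) (by omega)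
          (hxu _ _), hx'⟩
    obtain ⟨y, hyG, hy⟩ := exists_mem_strategyCore_of_eqOn hs hwin (fun n => hu _ _) hcoh
    exact ⟨⟨y, hyG⟩, fun n => show y ∈ strategyCell s n (x n) from hc (x n) n ▸ hy n⟩

end StrategyTree

/-- If `X` is a metrizable space and Odd has a winning strategy
in the classical Banach–Mazur game `BM(X)`, then `X` contains a dense completely
metrizable subspace. -/
theorem dense_completely_metrizable_of_odd_wins {X : Type*}
    [TopologicalSpace X] [TopologicalSpace.MetrizableSpace X]
    (h : TopOddWins X) :
    ∃ G : Set X, Dense G ∧ IsCompletelyMetrizable ↥G := by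
  let := TopologicalSpace.metrizableSpaceMetric X
  obtain ⟨s, hs, hwin⟩ := h
  exact ⟨strategyCore s, dense_strategyCore hs hwin,
    (isCompletelyMetrizableSpace_strategyCore hs hwin).complete⟩
end

section
/- Let K be a nonempty compact Hausdorff topological space. Then Odd has a winning strategy in the game BM(K, ⋆) if and only if K contains a dense G_δ subspace that is metrizable. -/
/-!
If `G = ⋂ₖ Wₖ` is a dense metrizable `G_δ`, Odd answers Eve's move `U₂ₖ` with a nonempty open
set whose closure lies in `U₂ₖ ∩ Wₖ` and whose trace on `G` has diameter less than `1/(k+1)`. By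
compactness the intersection of the play equals the nonempty intersection of the closures of
Odd's moves; it lies in `G` and has diameter zero, so it is a single point.

Conversely, fix a winning strategy for Odd. Zorn's lemma gives, level by level, maximal families
of positions consistent with the strategy whose last moves are pairwise disjoint and hence have
dense union, each position extending one of the previous level, with every move of Eve having
its closure inside the preceding move. The intersection `G` over all levels of these dense open
unions is a dense `G_δ` by Baire's theorem. A point of `G` lies on a unique branch of this tree;
the branch is a play consistent with the strategy, so its intersection is that point, and by
compactness the moves along the branch form a neighbourhood basis of it. Hence the map sending a
point of `G` to its branch embeds `G` into a countable product of discrete spaces.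
-/

open Set Filter Topology TopologicalSpace

section GeneralTopology

variable {X : Type*} [TopologicalSpace X]

theorem exists_isOpen_nonempty_closure_subset [RegularSpace X] {U : Set X} (hU : IsOpen U)
    (hne : U.Nonempty) : ∃ V, IsOpen V ∧ V.Nonempty ∧ closure V ⊆ U := by
  obtain ⟨x, hx⟩ := hne
  obtain ⟨V, ⟨hxV, hV⟩, hVU⟩ := (hasBasis_opens_closure x).mem_iff.1 (hU.mem_nhds hx)
  exact ⟨V, hV, ⟨x, hxV⟩, hVU⟩

theorem iInter_closure_eq_iInter_of_closure_subset {U : ℕ → Set X}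
    (hcl : ∀ n, ∃ m, closure (U m) ⊆ U n) : ⋂ n, closure (U n) = ⋂ n, U n :=
  subset_antisymm
    (subset_iInter fun n => (hcl n).elim fun m hm => (iInter_subset _ m).trans hm)
    (iInter_mono fun _ => subset_closure)

theorem nonempty_iInter_of_closure_subset [CompactSpace X] {U : ℕ → Set X} (hU : Antitone U)
    (hne : ∀ n, (U n).Nonempty) (hcl : ∀ n, ∃ m, closure (U m) ⊆ U n) :
    (⋂ n, U n).Nonempty := by
  rw [← iInter_closure_eq_iInter_of_closure_subset hcl]
  exact IsCompact.nonempty_iInter_of_sequence_nonempty_isCompact_isClosed _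
    (fun n => closure_mono (hU n.le_succ)) (fun n => (hne n).closure)
    isClosed_closure.isCompact fun _ => isClosed_closure

theorem exists_subset_of_closure_subset [CompactSpace X] {U : ℕ → Set X} (hU : Antitone U)
    (hcl : ∀ n, ∃ m, closure (U m) ⊆ U n) {O : Set X} (hO : ∀ x ∈ ⋂ n, U n, O ∈ 𝓝 x) :
    ∃ n, U n ⊆ O := by
  rw [← iInter_closure_eq_iInter_of_closure_subset hcl] at hO
  obtain ⟨n, hn⟩ := exists_subset_nhds_of_isCompact'
    ((monotone_closure X).comp_antitone hU).directed_ge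
    (fun _ => isClosed_closure.isCompact) (fun _ => isClosed_closure) hO
  exact ⟨n, subset_closure.trans hn⟩

theorem exists_pairwiseDisjoint_dense_biUnion {ι : Type*} {C : Set ι} {f : ι → Set X}
    (hne : ∀ i ∈ C, (f i).Nonempty) (hC : ∀ O, IsOpen O → O.Nonempty → ∃ i ∈ C, f i ⊆ O) :
    ∃ S ⊆ C, S.PairwiseDisjoint f ∧ Dense (⋃ i ∈ S, f i) := by
  obtain ⟨S, ⟨hSC, hS⟩, hmax⟩ := zorn_subset {S | S ⊆ C ∧ S.PairwiseDisjoint f}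
    fun c hc hchain => ⟨⋃₀ c, ⟨sUnion_subset fun S hS => (hc hS).1,
      (pairwiseDisjoint_sUnion hchain.directedOn).2 fun S hS => (hc hS).2⟩,
      fun _ => subset_sUnion_of_mem⟩
  refine ⟨S, hSC, hS, dense_iff_inter_open.2 fun O hO hOne => ?_⟩
  by_contra hdisj
  rw [not_nonempty_iff_eq_empty, ← disjoint_iff_inter_eq_empty] at hdisj
  obtain ⟨c, hcC, hcO⟩ := hC O hO hOne
  have hcS : c ∈ S := hmax ⟨insert_subset hcC hSC, hS.insert fun j hj _ =>
    (hdisj.mono hcO (subset_biUnion_of_mem hj))⟩ (subset_insert c S) (mem_insert c S)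
  obtain ⟨y, hy⟩ := hne c hcC
  exact hdisj.ne_of_mem (hcO hy) (mem_biUnion hcS hy) rfl

theorem metrizableSpace_of_isLocallyConstant [T0Space X] {E : ℕ → Type*} (φ : ∀ n, X → E n)
    (hφ : ∀ n, IsLocallyConstant (φ n))
    (hbasis : ∀ x, ∀ U ∈ 𝓝 x, ∃ n, {y | φ n y = φ n x} ⊆ U) : MetrizableSpace X := by
  let _ : ∀ n, TopologicalSpace (E n) := fun _ => ⊥
  have _ : ∀ n, DiscreteTopology (E n) := fun _ => ⟨rfl⟩
  have hcont : Continuous fun x n => φ n x := continuous_pi fun n => (hφ n).continuous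
  refine (Topology.IsInducing.isEmbedding (Topology.isInducing_iff_nhds.2 fun x =>
    le_antisymm (hcont.tendsto x).le_comap fun U hU => ?_)).metrizableSpace
  obtain ⟨n, hn⟩ := hbasis x U hU
  exact mem_comap.2 ⟨{e | e n = φ n x},
    ((isOpen_discrete {φ n x}).preimage (continuous_apply n)).mem_nhds rfl, hn⟩

theorem exists_isOpen_closure_subset_forall_dist_lt [RegularSpace X] {Y : Type*}
    [PseudoMetricSpace Y] {e : Y → X} (he : IsInducing e) (hd : DenseRange e) {U : Set X}
    (hU : IsOpen U) (hne : U.Nonempty) {ε : ℝ} (hε : 0 < ε) :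
    ∃ V, IsOpen V ∧ V.Nonempty ∧ closure V ⊆ U ∧ ∀ a b, e a ∈ V → e b ∈ V → dist a b < ε := by
  obtain ⟨c, hc⟩ := hd.exists_mem_open hU hne
  obtain ⟨O, hO, hOball⟩ := he.isOpen_iff.1 (Metric.isOpen_ball (x := c) (ε := ε / 2))
  have hcO : e c ∈ O := by
    rw [← mem_preimage, hOball]
    exact Metric.mem_ball_self (half_pos hε)
  obtain ⟨V, hV, hVne, hVsub⟩ := exists_isOpen_nonempty_closure_subset (hO.inter hU) ⟨_, hcO, hc⟩
  refine ⟨V, hV, hVne, hVsub.trans inter_subset_right, fun a b ha hb => ?_⟩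
  have hVO : e ⁻¹' V ⊆ Metric.ball c (ε / 2) :=
    hOball ▸ preimage_mono (subset_closure.trans (hVsub.trans inter_subset_left))
  calc dist a b ≤ dist a c + dist b c := dist_triangle_right a b c
    _ < ε / 2 + ε / 2 := add_lt_add (hVO ha) (hVO hb)
    _ = ε := add_halves ε

end GeneralTopology

section ConstAfter

variable {α : Type*}

def constAfter (p : ℕ → α) (N : ℕ) (W : α) : ℕ → α :=
  fun i => if i ≤ N then p i else W

variable {p : ℕ → α} {N i : ℕ} {W : α}

theorem constAfter_of_le (h : i ≤ N) : constAfter p N W i = p i := if_pos h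

theorem constAfter_of_lt (h : N < i) : constAfter p N W i = W := if_neg (not_le.2 h)

end ConstAfter

section Plays

variable {X : Type*} [TopologicalSpace X] {p : ℕ → Set X}

theorem TopPlay.antitone (hp : TopPlay p) : Antitone p :=
  antitone_nat_of_succ_le hp.2.2

theorem TopPlay.topPartialPlay (hp : TopPlay p) (m : ℕ) :
    TopPartialPlay fun i : Fin m => p i :=
  ⟨fun _ => hp.1 _, fun _ => hp.2.1 _, fun _ _ hij => hp.antitone hij⟩

theorem TopPlay.constAfter {N : ℕ} {W : Set X} (hp : TopPlay p) (hW : IsOpen W) (hWne : W.Nonempty)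
    (hWp : W ⊆ p N) : TopPlay (constAfter p N W) := by
  refine ⟨fun i => ?_, fun i => ?_, fun i => ?_⟩ <;> unfold _root_.constAfter
  · split_ifs
    exacts [hp.1 i, hW]
  · split_ifs
    exacts [hp.2.1 i, hWne]
  · split_ifs with h₁ h₂ h₂
    · exact hp.2.2 i
    · omega
    · exact hWp.trans (hp.antitone h₂)
    · exact subset_rfl

end Plays

namespace TopOddStrategy

variable {X : Type*} {s : TopOddStrategy X}

def respond (s : TopOddStrategy X) (p : ℕ → Set X) (k : ℕ) : ℕ → Set X :=
  constAfter p (2 * k) (s k fun i => p i)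

theorem respond_of_le {p : ℕ → Set X} {k i : ℕ} (h : i ≤ 2 * k) : s.respond p k i = p i :=
  constAfter_of_le h

theorem respond_follows (p : ℕ → Set X) (k : ℕ) :
    s.respond p k (2 * k + 1) = s k fun i => s.respond p k i := by
  rw [respond, constAfter_of_lt (by omega)]
  congr 1
  funext i
  exact (constAfter_of_le (Nat.lt_succ_iff.1 i.2)).symm

variable [TopologicalSpace X]

theorem topPlay_respond (hs : TopOddValid s) {p : ℕ → Set X} (hp : TopPlay p) (k : ℕ) :
    TopPlay (s.respond p k) :=
  have hv := hs k _ (hp.topPartialPlay (2 * k + 1))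
  hp.constAfter hv.1 hv.2.1 hv.2.2

/-- The closure condition on Eve's moves lets compactness control the intersection along a
branch of nodes. -/
structure IsNode (s : TopOddStrategy X) (n : ℕ) (p : ℕ → Set X) : Prop where
  topPlay : TopPlay p
  follows : ∀ k ≤ n, p (2 * k + 1) = s k fun i => p i
  closure_subset : ∀ k < n, closure (p (2 * k + 2)) ⊆ p (2 * k + 1)

theorem exists_isNode_zero (hs : TopOddValid s) {O : Set X} (hO : IsOpen O) (hne : O.Nonempty) :
    ∃ p, s.IsNode 0 p ∧ p 1 ⊆ O := by
  have hp := topPlay_respond hs (p := fun _ => O) ⟨fun _ => hO, fun _ => hne, fun _ => subset_rfl⟩ 0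
  refine ⟨_, ⟨hp, fun k hk => ?_, fun k hk => absurd hk k.not_lt_zero⟩,
    (hp.2.2 0).trans (respond_of_le le_rfl).subset⟩
  obtain rfl := Nat.le_zero.1 hk
  exact respond_follows _ 0

theorem IsNode.exists_child [RegularSpace X] (hs : TopOddValid s) {n : ℕ} {q : ℕ → Set X}
    (hq : s.IsNode n q) {O : Set X} (hO : IsOpen O) (hne : O.Nonempty) (hOq : O ⊆ q (2 * n + 1)) :
    ∃ p, s.IsNode (n + 1) p ∧ (∀ i ≤ 2 * n + 1, p i = q i) ∧ p (2 * (n + 1) + 1) ⊆ O := by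
  obtain ⟨W, hW, hWne, hWO⟩ := exists_isOpen_nonempty_closure_subset hO hne
  set r := constAfter q (2 * n + 1) W
  have hr : TopPlay r := hq.topPlay.constAfter hW hWne (subset_closure.trans (hWO.trans hOq))
  have hp := topPlay_respond hs hr (n + 1)
  have hpr : ∀ i ≤ 2 * (n + 1), s.respond r (n + 1) i = r i := fun i => respond_of_le
  have hpq : ∀ i ≤ 2 * n + 1, s.respond r (n + 1) i = q i := fun i hi =>
    (hpr i (by omega)).trans (constAfter_of_le hi)
  have hpW : s.respond r (n + 1) (2 * n + 2) = W :=
    (hpr _ (by omega)).trans (constAfter_of_lt (by omega))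
  refine ⟨_, ⟨hp, fun k hk => ?_, fun k hk => ?_⟩, hpq, ?_⟩
  · rcases Nat.le_succ_iff.1 hk with hk | rfl
    · rw [hpq _ (by omega), hq.follows k hk]
      congr 1
      funext i
      exact (hpq i (by omega)).symm
    · exact respond_follows r (n + 1)
  · rcases Nat.lt_succ_iff_lt_or_eq.1 hk with hk | rfl
    · rw [hpq _ (by omega), hpq _ (by omega)]
      exact hq.closure_subset k hk
    · rw [hpW, hpq _ le_rfl]
      exact hWO.trans hOq
  · calc s.respond r (n + 1) (2 * (n + 1) + 1) ⊆ s.respond r (n + 1) (2 * n + 2) := hp.2.2 _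
      _ ⊆ O := hpW ▸ subset_closure.trans hWO

structure IsLevel (s : TopOddStrategy X) (n : ℕ) (S : Set (ℕ → Set X)) : Prop where
  isNode : ∀ p ∈ S, s.IsNode n p
  pairwiseDisjoint : S.PairwiseDisjoint (· (2 * n + 1))
  dense : Dense (⋃ p ∈ S, p (2 * n + 1))

theorem exists_isLevel_zero (hs : TopOddValid s) : ∃ S, s.IsLevel 0 S := by
  obtain ⟨S, hSC, hS, hSd⟩ := exists_pairwiseDisjoint_dense_biUnion (C := {p | s.IsNode 0 p})
    (f := (· (2 * 0 + 1))) (fun p hp => hp.topPlay.2.1 _)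
    fun O hO hne => exists_isNode_zero hs hO hne
  exact ⟨S, fun p hp => hSC hp, hS, hSd⟩

theorem IsLevel.exists_refinement [RegularSpace X] (hs : TopOddValid s) {n : ℕ}
    {S : Set (ℕ → Set X)} (hS : s.IsLevel n S) :
    ∃ T, s.IsLevel (n + 1) T ∧ ∀ p ∈ T, ∃ q ∈ S, ∀ i ≤ 2 * n + 1, p i = q i := by
  set C := {p | s.IsNode (n + 1) p ∧ ∃ q ∈ S, ∀ i ≤ 2 * n + 1, p i = q i}
  have hC : ∀ O, IsOpen O → O.Nonempty → ∃ p ∈ C, p (2 * (n + 1) + 1) ⊆ O := by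
    intro O hO hne
    obtain ⟨y, hyO, hy⟩ := hS.dense.inter_open_nonempty O hO hne
    obtain ⟨q, hqS, hyq⟩ := mem_iUnion₂.1 hy
    have hq := hS.isNode q hqS
    obtain ⟨p, hp, hpq, hpO⟩ :=
      hq.exists_child hs (hO.inter (hq.topPlay.1 _)) ⟨y, hyO, hyq⟩ inter_subset_right
    exact ⟨p, ⟨hp, q, hqS, hpq⟩, hpO.trans inter_subset_left⟩
  obtain ⟨T, hTC, hT, hTd⟩ := exists_pairwiseDisjoint_dense_biUnion
    (C := C) (f := (· (2 * (n + 1) + 1))) (fun p hp => hp.1.topPlay.2.1 _) hC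
  exact ⟨T, ⟨fun p hp => (hTC hp).1, hT, hTd⟩, fun p hp => (hTC hp).2⟩

theorem IsLevel.eq_of_mem {n : ℕ} {S : Set (ℕ → Set X)} (hS : s.IsLevel n S) {p q : ℕ → Set X}
    (hp : p ∈ S) (hq : q ∈ S) {x : X} (hxp : x ∈ p (2 * n + 1)) (hxq : x ∈ q (2 * n + 1)) :
    p = q :=
  hS.pairwiseDisjoint.elim hp hq (not_disjoint_iff.2 ⟨x, hxp, hxq⟩)

theorem exists_isLevel_seq [RegularSpace X] (hs : TopOddValid s) :
    ∃ F : ℕ → Set (ℕ → Set X), (∀ n, s.IsLevel n (F n)) ∧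
      ∀ n, ∀ p ∈ F (n + 1), ∃ q ∈ F n, ∀ i ≤ 2 * n + 1, p i = q i := by
  obtain ⟨S₀, hS₀⟩ := exists_isLevel_zero hs
  choose next hnext using fun n (S : {S // s.IsLevel n S}) => S.2.exists_refinement hs
  let F : (n : ℕ) → {S // s.IsLevel n S} :=
    fun n => Nat.rec ⟨S₀, hS₀⟩ (fun n S => ⟨next n S, (hnext n S).1⟩) n
  exact ⟨fun n => (F n).1, fun n => (F n).2, fun n => (hnext n (F n)).2⟩

section Branch

variable {N : ℕ → ℕ → Set X} (hN : ∀ n, s.IsNode n (N n)) (hcoh : ∀ n, ∀ i ≤ 2 * n + 1, N (n + 1) i = N n i)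
include hcoh

omit [TopologicalSpace X] in
theorem agree_of_le {n n' : ℕ} (h : n ≤ n') : ∀ i ≤ 2 * n + 1, N n' i = N n i := by
  induction n', h using Nat.le_induction with
  | base => exact fun _ _ => rfl
  | succ m _ ih => exact fun i hi => (hcoh m i (by omega)).trans (ih i hi)

omit [TopologicalSpace X] in
theorem diag_eq {m n : ℕ} (h : m ≤ 2 * n + 1) : N m m = N n m := by
  rcases le_total m n with h' | h'
  · exact (agree_of_le hcoh h' m (by omega)).symm
  · exact agree_of_le hcoh h' m h

include hN

theorem topPlay_diag : TopPlay fun m => N m m :=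
  ⟨fun m => (hN m).topPlay.1 m, fun m => (hN m).topPlay.2.1 m, fun m =>
    (diag_eq hcoh (n := m) (by omega)).trans_subset ((hN m).topPlay.2.2 m)⟩

theorem topOddFollows_diag : TopOddFollows (fun m => N m m) s := fun k => by
  show N (2 * k + 1) (2 * k + 1) = s k fun i => N i i
  rw [diag_eq hcoh (n := k) le_rfl, (hN k).follows k le_rfl]
  congr 1
  funext i
  exact (diag_eq hcoh (by omega)).symm

theorem closure_diag_subset (k : ℕ) :
    closure (N (2 * k + 2) (2 * k + 2)) ⊆ N (2 * k + 1) (2 * k + 1) := by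
  rw [diag_eq hcoh (n := k + 1) (by omega), diag_eq hcoh (n := k + 1) (by omega)]
  exact (hN (k + 1)).closure_subset k k.lt_succ_self

theorem exists_isNode_subset [CompactSpace X]
    (hw : ∀ U : ℕ → Set X, TopPlay U → TopOddFollows U s → ∃ x : X, (⋂ n, U n) = {x})
    {x : X} (hx : ∀ n, x ∈ N n (2 * n + 1)) {O : Set X} (hO : O ∈ 𝓝 x) :
    ∃ n, N n (2 * n + 1) ⊆ O := by
  have hD := topPlay_diag hN hcoh
  have hxD : ∀ m, x ∈ N m m := fun m => (hN m).topPlay.antitone (by omega) (hx m)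
  obtain ⟨y, hy⟩ := hw _ hD (topOddFollows_diag hN hcoh)
  have hxy : x ∈ ({y} : Set X) := hy ▸ mem_iInter.2 hxD
  have hDx : ⋂ m, N m m = {x} := by rw [hy, eq_of_mem_singleton hxy]
  obtain ⟨m, hm⟩ := exists_subset_of_closure_subset (O := O) hD.antitone
    (fun n => ⟨2 * n + 2, (closure_diag_subset hN hcoh n).trans (hD.antitone (by omega))⟩)
    fun z hz => by rw [hDx, mem_singleton_iff] at hz; rwa [hz]
  exact ⟨m, ((hN m).topPlay.antitone (by omega)).trans hm⟩

end Branch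

end TopOddStrategy

open TopOddStrategy in
theorem TopOddWinsStar.exists_dense_isGδ_metrizableSpace {X : Type*} [TopologicalSpace X]
    [CompactSpace X] [RegularSpace X] [T0Space X] (h : TopOddWinsStar X) : ∃ G : Set X, Dense G ∧ IsGδ G ∧ MetrizableSpace G := by
  obtain ⟨s, hs, hw⟩ := h
  obtain ⟨F, hF, hFcoh⟩ := exists_isLevel_seq hs
  have hopen : ∀ n, IsOpen (⋃ p ∈ F n, p (2 * n + 1)) := fun n =>
    isOpen_biUnion fun p hp => ((hF n).isNode p hp).topPlay.1 _
  refine ⟨_, dense_iInter_of_isOpen hopen fun n => (hF n).dense, .iInter_of_isOpen hopen, ?_⟩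
  choose φ hφF hxφ using fun (x : ↥(⋂ n, ⋃ p ∈ F n, p (2 * n + 1))) n =>
    mem_iUnion₂.1 (mem_iInter.1 x.2 n)
  have hφ : ∀ x n, s.IsNode n (φ x n) := fun x n => (hF n).isNode _ (hφF x n)
  have hcoh : ∀ x n, ∀ i ≤ 2 * n + 1, φ x (n + 1) i = φ x n i := by
    intro x n
    obtain ⟨q, hq, hpq⟩ := hFcoh n _ (hφF x (n + 1))
    have hxq : (x : X) ∈ q (2 * n + 1) :=
      hpq _ le_rfl ▸ (hφ x (n + 1)).topPlay.antitone (by omega) (hxφ x (n + 1))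
    rw [(hF n).eq_of_mem hq (hφF x n) hxq (hxφ x n)] at hpq
    exact hpq
  refine metrizableSpace_of_isLocallyConstant (fun n x => φ x n)
    (fun n => (IsLocallyConstant.iff_exists_open _).2 fun x =>
      ⟨Subtype.val ⁻¹' φ x n (2 * n + 1), ((hφ x n).topPlay.1 _).preimage continuous_subtype_val,
        hxφ x n, fun y hy => (hF n).eq_of_mem (hφF y n) (hφF x n) (hxφ y n) hy⟩)
    fun x U hU => ?_
  obtain ⟨O, hO, hOU⟩ := (mem_nhds_subtype _ x U).1 hU
  obtain ⟨n, hn⟩ := exists_isNode_subset (hφ x) (hcoh x) hw (hxφ x) hO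
  exact ⟨n, fun y hy => hOU (hn (hy ▸ hxφ y n))⟩

theorem TopOddWinsStar.of_dense_isGδ {X : Type*} [TopologicalSpace X] [CompactSpace X]
    [RegularSpace X] {G : Set X} (hG : Dense G) (hGδ : IsGδ G) [MetrizableSpace G] :
    TopOddWinsStar X := by
  obtain ⟨W, hWo, rfl⟩ := hGδ.eq_iInter_nat
  let _ := metrizableSpaceMetric (⋂ n, W n)
  have hsmall : ∀ U, IsOpen U → U.Nonempty → ∀ k : ℕ, ∃ V, IsOpen V ∧ V.Nonempty ∧
      closure V ⊆ U ∩ W k ∧ ∀ a b : ↥(⋂ n, W n), (a : X) ∈ V → (b : X) ∈ V →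
        dist a b < 1 / ((k : ℝ) + 1) := fun U hU hne k =>
    exists_isOpen_closure_subset_forall_dist_lt IsInducing.subtypeVal hG.denseRange_val
      (hU.inter (hWo k)) ((hG.mono (iInter_subset W k)).inter_open_nonempty U hU hne)
      Nat.one_div_pos_of_nat
  choose! V hVo hVne hVsub hVdist using hsmall
  refine ⟨fun k v => V (v (Fin.last (2 * k))) k, fun k v hv => ⟨hVo _ (hv.1 _) (hv.2.1 _) k,
    hVne _ (hv.1 _) (hv.2.1 _) k, subset_closure.trans ((hVsub _ (hv.1 _) (hv.2.1 _) k).trans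
    inter_subset_left)⟩, fun U hU hfol => ?_⟩
  have hUV : ∀ k, U (2 * k + 1) = V (U (2 * k)) k := hfol
  have hcl : ∀ k, closure (U (2 * k + 1)) ⊆ U (2 * k) ∩ W k := fun k =>
    hUV k ▸ hVsub _ (hU.1 _) (hU.2.1 _) k
  obtain ⟨y, hy⟩ := nonempty_iInter_of_closure_subset hU.antitone hU.2.1 fun n =>
    ⟨2 * n + 1, ((hcl n).trans inter_subset_left).trans (hU.antitone (by omega))⟩
  have hUW : ⋂ n, U n ⊆ ⋂ k, W k := fun z hz => mem_iInter.2 fun k =>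
    ((hcl k).trans inter_subset_right) (subset_closure (mem_iInter.1 hz _))
  refine ⟨y, eq_singleton_iff_unique_mem.2 ⟨hy, fun z hz => ?_⟩⟩
  have hzy : (⟨z, hUW hz⟩ : ↥(⋂ n, W n)) = ⟨y, hUW hy⟩ := eq_of_forall_dist_le fun ε hε => by
    obtain ⟨k, hk⟩ := exists_nat_one_div_lt hε
    have hV : ∀ w ∈ ⋂ n, U n, w ∈ V (U (2 * k)) k := fun w hw => hUV k ▸ mem_iInter.1 hw _
    exact (hVdist _ (hU.1 _) (hU.2.1 _) k _ _ (hV z hz) (hV y hy)).le.trans hk.le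
  exact congrArg Subtype.val hzy

theorem odd_wins_star_iff_dense_Gdelta_metrizable_general {K : Type*} [TopologicalSpace K]
    [CompactSpace K] [T2Space K] :
    TopOddWinsStar K ↔
      ∃ G : Set K, Dense G ∧ IsGδ G ∧ TopologicalSpace.MetrizableSpace ↥G :=
  ⟨TopOddWinsStar.exists_dense_isGδ_metrizableSpace, fun ⟨_, hG, hGδ, _⟩ =>
    TopOddWinsStar.of_dense_isGδ hG hGδ⟩

/-- For a nonempty compact Hausdorff space `K`, Odd has a
winning strategy in the game `BM(K, ⋆)` iff `K` contains a dense `G_δ`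
metrizable subspace. -/
theorem odd_wins_star_iff_dense_Gdelta_metrizable {K : Type*} [TopologicalSpace K]
    [CompactSpace K] [T2Space K] [Nonempty K] :
    TopOddWinsStar K ↔
      ∃ G : Set K, Dense G ∧ IsGδ G ∧ TopologicalSpace.MetrizableSpace ↥G :=
  odd_wins_star_iff_dense_Gdelta_metrizable_general
end

section
/- Let K be the double arrow space: the set ((0,1] × {0}) ∪ ([0,1) × {1}) equipped with the order topology of the lexicographic linear order (i.e., (x,i) < (y,j) iff x < y, or x = y and i < j). Then Eve has a winning strategy in the game BM(K, ⋆). -/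
/-! The double arrow space: `((0,1] × {0}) ∪ ([0,1) × {1})` with the order
topology of the lexicographic order (with `false < true` in `Bool`). -/

/-- The underlying set of the double arrow space, inside the lexicographic
product `ℝ ×ₗ Bool`. -/
def DoubleArrow : Type :=
  {p : ℝ ×ₗ Bool //
    (0 < (ofLex p).1 ∧ (ofLex p).1 ≤ 1 ∧ (ofLex p).2 = false) ∨
    (0 ≤ (ofLex p).1 ∧ (ofLex p).1 < 1 ∧ (ofLex p).2 = true)}

noncomputable instance : LinearOrder DoubleArrow :=
  inferInstanceAs (LinearOrder {p : ℝ ×ₗ Bool // _})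

/-- The double arrow space carries the order topology of its linear order. -/
noncomputable instance : TopologicalSpace DoubleArrow := Preorder.topology DoubleArrow

instance : OrderTopology DoubleArrow := ⟨rfl⟩

/-!
Eve wins by playing preimages of open intervals under the projection `K → [0, 1]`, each time
choosing (inside Odd's last move) one whose closure lies strictly inside her previous interval.
The real intervals are then nested compact intervals, so they have a common point `c ∈ (0, 1)`,
and the whole fibre `{(c, 0), (c, 1)}` of `c` lies in the intersection of the play.
-/

open Set Topology

section EveResponse

variable {X : Type*} [TopologicalSpace X]

def TopEveStrategy.ofResponse (r : Set X → Set X) : TopEveStrategy X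
  | 0, _ => r univ
  | k + 1, v => r (v ⟨2 * k + 1, by omega⟩)

theorem TopEveStrategy.valid_ofResponse [Nonempty X] {r : Set X → Set X}
    (hr : ∀ W, IsOpen W → W.Nonempty → IsOpen (r W) ∧ (r W).Nonempty ∧ r W ⊆ W) :
    TopEveValid (ofResponse r) := by
  rintro (_ | k) v hv
  · exact ⟨(hr univ isOpen_univ univ_nonempty).1, (hr univ isOpen_univ univ_nonempty).2.1,
      fun i => i.elim0⟩
  · obtain ⟨hopen, hne, hsub⟩ := hr _ (hv.1 ⟨2 * k + 1, by omega⟩) (hv.2.1 _)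
    refine ⟨hopen, hne, fun i => hsub.trans (hv.2.2 i _ ?_)⟩
    show i.val ≤ 2 * k + 1
    have := i.isLt
    omega

theorem topEveWinsStar_of_response [Nonempty X] (r : Set X → Set X)
    (hr : ∀ W, IsOpen W → W.Nonempty → IsOpen (r W) ∧ (r W).Nonempty ∧ r W ⊆ W)
    (hwin : ∀ W : ℕ → Set X, (∀ k, IsOpen (W k)) → (∀ k, (W k).Nonempty) →
      (∀ k, W (k + 1) ⊆ r (W k)) → ¬ ∃ x, ⋂ k, r (W k) = {x}) :
    TopEveWinsStar X := by
  refine ⟨.ofResponse r, TopEveStrategy.valid_ofResponse hr, fun U ⟨hopen, hne, hdec⟩ hfol => ?_⟩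
  -- Odd's moves, preceded by the whole space to which Eve's opening move answers
  let W : ℕ → Set X
    | 0 => univ
    | k + 1 => U (2 * k + 1)
  have hU : ∀ k, U (2 * k) = r (W k) := by
    rintro (_ | k)
    exacts [hfol 0, hfol (k + 1)]
  have hanti : Antitone U := antitone_nat_of_succ_le hdec
  have hinter : ⋂ n, U n = ⋂ k, r (W k) := by
    refine Subset.antisymm (fun x hx => ?_) (fun x hx => ?_) <;> rw [mem_iInter] at hx ⊢
    · exact fun k => hU k ▸ hx (2 * k)
    · exact fun n => hanti (by omega : n ≤ 2 * n) (hU n ▸ hx n)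
  rw [hinter]
  refine hwin W (by rintro (_ | k); exacts [isOpen_univ, hopen _])
    (by rintro (_ | k); exacts [univ_nonempty, hne _]) fun k => ?_
  rw [← hU k]
  exact hdec _

end EveResponse

section NestedIntervals

variable {L : Type*} [LinearOrder L] [TopologicalSpace L] [OrderClosedTopology L]
  [CompactIccSpace L]

theorem nonempty_iInter_Ioo_of_Icc_subset_Ioo {a b : ℕ → L} (hab : ∀ k, a k ≤ b k)
    (h : ∀ k, Icc (a (k + 1)) (b (k + 1)) ⊆ Ioo (a k) (b k)) :
    (⋂ k, Ioo (a k) (b k)).Nonempty := by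
  obtain ⟨c, hc⟩ := IsCompact.nonempty_iInter_of_sequence_nonempty_isCompact_isClosed
    (fun k => Icc (a k) (b k)) (fun k => (h k).trans Ioo_subset_Icc_self)
    (fun k => nonempty_Icc.2 (hab k)) isCompact_Icc (fun _ => isClosed_Icc)
  exact ⟨c, mem_iInter.2 fun k => h k (mem_iInter.1 hc (k + 1))⟩

theorem topEveWinsStar_of_preimage_Icc_subset [DenselyOrdered L] {X : Type*}
    [TopologicalSpace X] [Nonempty X] (π : X → L) (S : Set L) (hπ : Continuous π)
    (hbase : ∀ U, IsOpen U → U.Nonempty → ∃ a b, a < b ∧ Icc a b ⊆ S ∧ π ⁻¹' Icc a b ⊆ U)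
    (hfib : ∀ c ∈ S, (π ⁻¹' {c}).Nontrivial) :
    TopEveWinsStar X := by
  have : Nonempty L := ⟨π (Classical.arbitrary X)⟩
  choose! a b hab hS hsub using hbase
  have hrange : S ⊆ range π := fun c hc => (hfib c hc).nonempty
  refine topEveWinsStar_of_response (fun W => π ⁻¹' Ioo (a W) (b W)) (fun W hWo hWn => ?_) ?_
  · obtain ⟨c, hc⟩ := exists_between (hab W hWo hWn)
    obtain ⟨x, hx⟩ := hrange (hS W hWo hWn (Ioo_subset_Icc_self hc))
    exact ⟨isOpen_Ioo.preimage hπ, ⟨x, by rw [mem_preimage, hx]; exact hc⟩,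
      (preimage_mono Ioo_subset_Icc_self).trans (hsub W hWo hWn)⟩
  · intro W hWo hWn hWr
    have hnest : ∀ k, Icc (a (W (k + 1))) (b (W (k + 1))) ⊆ Ioo (a (W k)) (b (W k)) :=
      fun k => (preimage_subset_preimage_iff ((hS _ (hWo _) (hWn _)).trans hrange)).1
        ((hsub _ (hWo _) (hWn _)).trans (hWr k))
    obtain ⟨c, hc⟩ :=
      nonempty_iInter_Ioo_of_Icc_subset_Ioo (fun k => (hab _ (hWo k) (hWn k)).le) hnest
    have hcS : c ∈ S := hS _ (hWo 0) (hWn 0) (Ioo_subset_Icc_self (mem_iInter.1 hc 0))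
    have hfib_sub : π ⁻¹' {c} ⊆ ⋂ k, π ⁻¹' Ioo (a (W k)) (b (W k)) := by
      rw [← preimage_iInter]
      exact preimage_mono (singleton_subset_iff.2 hc)
    rintro ⟨x, hx⟩
    exact not_nontrivial_singleton (hx ▸ (hfib c hcS).mono hfib_sub)

end NestedIntervals

namespace DoubleArrow

def proj (p : DoubleArrow) : ℝ := (ofLex p.val).1

def lower (x : ℝ) (hx : x ∈ Ioc 0 1) : DoubleArrow :=
  ⟨toLex (x, false), Or.inl ⟨hx.1, hx.2, rfl⟩⟩

def upper (x : ℝ) (hx : x ∈ Ico 0 1) : DoubleArrow :=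
  ⟨toLex (x, true), Or.inr ⟨hx.1, hx.2, rfl⟩⟩

instance : Nonempty DoubleArrow := ⟨upper 0 ⟨le_rfl, zero_lt_one⟩⟩

theorem proj_mem_Icc (p : DoubleArrow) : proj p ∈ Icc 0 1 := by
  rcases p.2 with ⟨h0, h1, -⟩ | ⟨h0, h1, -⟩
  exacts [⟨h0.le, h1⟩, ⟨h0, h1.le⟩]

theorem monotone_proj : Monotone proj := fun _ _ h => Prod.Lex.monotone_fst _ _ h

theorem continuous_proj : Continuous proj := by
  refine (Monotone.continuous_of_surjective (f := codRestrict proj _ proj_mem_Icc)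
    (fun _ _ h => monotone_proj h) fun ⟨x, hx⟩ => ?_).subtype_val
  rcases hx.2.lt_or_eq with h1 | rfl
  exacts [⟨upper x ⟨hx.1, h1⟩, rfl⟩, ⟨lower 1 ⟨zero_lt_one, le_rfl⟩, rfl⟩]

theorem proj_preimage_singleton_nontrivial {c : ℝ} (hc : c ∈ Ioo 0 1) :
    (proj ⁻¹' {c}).Nontrivial :=
  ⟨lower c ⟨hc.1, hc.2.le⟩, rfl, upper c ⟨hc.1.le, hc.2⟩, rfl,
    fun h => Bool.false_ne_true (congrArg (fun p : DoubleArrow => (ofLex p.val).2) h)⟩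

theorem exists_proj_lt_Ioo_subset_of_mem_nhds {U : Set DoubleArrow} {p : DoubleArrow}
    (hU : U ∈ 𝓝 p) :
    ∃ l u, proj l < proj u ∧ Ioo l u ⊆ U := by
  rcases p.2 with ⟨h0, h1, hb⟩ | ⟨h0, h1, hb⟩
  · obtain ⟨l, hl, hsub⟩ := exists_Ioc_subset_of_mem_nhds hU
      ⟨upper 0 ⟨le_rfl, zero_lt_one⟩, Prod.Lex.lt_iff.2 (Or.inl h0)⟩
    refine ⟨l, p, (Prod.Lex.lt_iff.1 hl).resolve_right ?_, Ioo_subset_Ioc_self.trans hsub⟩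
    simp [hb]
  · obtain ⟨u, hu, hsub⟩ := exists_Ico_subset_of_mem_nhds hU
      ⟨lower 1 ⟨zero_lt_one, le_rfl⟩, Prod.Lex.lt_iff.2 (Or.inl h1)⟩
    refine ⟨p, u, (Prod.Lex.lt_iff.1 hu).resolve_right ?_, Ioo_subset_Ico_self.trans hsub⟩
    simp [hb]

theorem exists_preimage_Icc_subset_of_isOpen {U : Set DoubleArrow} (hU : IsOpen U)
    (hne : U.Nonempty) :
    ∃ a b : ℝ, a < b ∧ Icc a b ⊆ Ioo 0 1 ∧ proj ⁻¹' Icc a b ⊆ U := by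
  obtain ⟨p, hp⟩ := hne
  obtain ⟨l, u, hlu, hsub⟩ := exists_proj_lt_Ioo_subset_of_mem_nhds (hU.mem_nhds hp)
  obtain ⟨a, hla, hau⟩ := exists_between hlu
  obtain ⟨b, hab, hbu⟩ := exists_between hau
  refine ⟨a, b, hab, fun x hx => ⟨?_, ?_⟩, fun q hq => hsub ⟨?_, ?_⟩⟩
  · linarith [(proj_mem_Icc l).1, hx.1]
  · linarith [(proj_mem_Icc u).2, hx.2]
  · exact monotone_proj.reflect_lt (hla.trans_le hq.1)
  · exact monotone_proj.reflect_lt (hq.2.trans_lt hbu)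

end DoubleArrow

/-- Eve has a winning strategy in the game `BM(K, ⋆)` played
on the double arrow space `K`. -/
theorem eve_wins_star_doubleArrow : TopEveWinsStar DoubleArrow :=
  topEveWinsStar_of_preimage_Icc_subset DoubleArrow.proj (Ioo 0 1) DoubleArrow.continuous_proj
    (fun _ => DoubleArrow.exists_preimage_Icc_subset_of_isOpen)
    (fun _ => DoubleArrow.proj_preimage_singleton_nontrivial)
end

section
/- Let X ⊆ 2^ω be a Bernstein set in the Cantor space 2^ω, i.e., for every subset P of 2^ω that is nonempty, completely metrizable in the subspace topology, and has no isolated points, both X ∩ P and P \ X are nonempty. Then the classical Banach–Mazur game BM(X), played in X with the subspace topology, is undetermined: neither Odd nor Eve has a winning strategy in BM(X). -/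
/-! Suppose a player has a winning strategy. Since a Bernstein set `X` has no isolated points,
the opponent can answer every move inside two disjoint cylinders, one for each bit; playing
along a branch `f : ℕ → Bool` of this binary tree of answers produces a play whose intersection
is `X ∩ {φ f}` for a continuous injective `φ : 2^ω → 2^ω`. The range of `φ` is a nonempty perfect
set, so it contains a point outside `X`, along whose branch Odd loses, and a point of `X`, along
whose branch Eve loses. A strategy of Odd is treated as one of Eve after the opening move `X`. -/

open Set Function Topology PiNat TopologicalSpace

section Outcome

variable {X : Type*} (e : TopEveStrategy X) (s : TopOddStrategy X)

def outcome (n : ℕ) : Set X :=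
  if h : n % 2 = 0 then e (n / 2) fun i => outcome (i : ℕ)
  else s (n / 2) fun i => outcome (i : ℕ)
termination_by n
decreasing_by all_goals omega

lemma topEveFollows_outcome : TopEveFollows (outcome e s) e := by
  intro k
  rw [outcome, dif_pos (by omega), show 2 * k / 2 = k by omega]

lemma topOddFollows_outcome : TopOddFollows (outcome e s) s := by
  intro k
  rw [outcome, dif_neg (by omega), show (2 * k + 1) / 2 = k by omega]

variable {e s}

lemma outcome_congr {s' : TopOddStrategy X} {n : ℕ} (h : ∀ k < n, s k = s' k) :
    ∀ i ≤ 2 * n, outcome e s i = outcome e s' i := by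
  intro i
  induction i using Nat.strong_induction_on with
  | _ i ih =>
  intro hi
  have hprefix : ∀ m ≤ i, (fun j : Fin m => outcome e s j) = fun j : Fin m => outcome e s' j :=
    fun m hm => funext fun j => ih j (by omega) (by omega)
  obtain ⟨k, rfl | rfl⟩ := i.even_or_odd'
  · rw [topEveFollows_outcome, topEveFollows_outcome, hprefix _ le_rfl]
  · rw [topOddFollows_outcome, topOddFollows_outcome, hprefix (2 * k + 1) le_rfl,
      h k (by omega)]

variable [TopologicalSpace X]

lemma topPartialPlay_outcome (he : TopEveValid e) (hs : TopOddValid s) (n : ℕ) :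
    TopPartialPlay fun i : Fin n => outcome e s i := by
  induction n with
  | zero => exact ⟨finZeroElim, finZeroElim, fun i => i.elim0⟩
  | succ n ih =>
    have hnew : IsOpen (outcome e s n) ∧ (outcome e s n).Nonempty ∧
        ∀ i : Fin n, outcome e s n ⊆ outcome e s i := by
      obtain ⟨k, rfl | rfl⟩ := n.even_or_odd'
      · rw [topEveFollows_outcome]
        exact he k _ ih
      · obtain ⟨hopen, hne, hsub⟩ := hs k _ ih
        rw [topOddFollows_outcome]
        exact ⟨hopen, hne, fun i => hsub.trans (ih.2.2 i (Fin.last _) (Fin.le_last i))⟩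
    refine ⟨Fin.lastCases hnew.1 fun i => ih.1 i, Fin.lastCases hnew.2.1 fun i => ih.2.1 i, ?_⟩
    intro i j hij
    induction j using Fin.lastCases with
    | last =>
      induction i using Fin.lastCases with
      | last => exact subset_rfl
      | cast i => exact hnew.2.2 i
    | cast j =>
      induction i using Fin.lastCases with
      | last => exact absurd hij (Fin.castSucc_lt_last j).not_ge
      | cast i => exact ih.2.2 i j hij

lemma topPlay_outcome (he : TopEveValid e) (hs : TopOddValid s) : TopPlay (outcome e s) :=
  ⟨fun n => (topPartialPlay_outcome he hs (n + 1)).1 (Fin.last n),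
    fun n => (topPartialPlay_outcome he hs (n + 1)).2.1 (Fin.last n),
    fun n => (topPartialPlay_outcome he hs (n + 2)).2.2 ⟨n, by omega⟩ ⟨n + 1, by omega⟩
      (Fin.le_def.2 n.le_succ)⟩

end Outcome

section OddToEve

variable {X : Type*} [TopologicalSpace X] {s : TopOddStrategy X}

def TopOddStrategy.toEve (s : TopOddStrategy X) : TopEveStrategy X :=
  fun k v => s k (Fin.cons univ v)

lemma TopPartialPlay.cons_univ [Nonempty X] {m : ℕ} {v : Fin m → Set X} (hv : TopPartialPlay v) :
    TopPartialPlay (Fin.cons univ v : Fin (m + 1) → Set X) := by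
  refine ⟨Fin.cases isOpen_univ hv.1, Fin.cases univ_nonempty hv.2.1, fun i j hij => ?_⟩
  induction i using Fin.cases with
  | zero => exact subset_univ _
  | succ i =>
    induction j using Fin.cases with
    | zero => exact absurd hij (by simp)
    | succ j => simpa using hv.2.2 i j (Fin.succ_le_succ_iff.1 hij)

lemma TopOddValid.toEve [Nonempty X] (hs : TopOddValid s) : TopEveValid s.toEve := by
  intro k v hv
  obtain ⟨hopen, hne, hsub⟩ := hs k _ hv.cons_univ
  refine ⟨hopen, hne, fun i => hsub.trans ?_⟩
  simpa using hv.cons_univ.2.2 i.succ (Fin.last _) (Fin.le_last _)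

lemma TopPlay.exists_topOddFollows_of_toEve {U : ℕ → Set X} (hU : TopPlay U)
    (hfol : TopEveFollows U s.toEve) :
    ∃ V : ℕ → Set X, TopPlay V ∧ TopOddFollows V s ∧ ⋂ n, V n = ⋂ n, U n := by
  let V : ℕ → Set X := fun | 0 => univ | n + 1 => U n
  refine ⟨V, ⟨?_, ?_, ?_⟩, fun k => ?_, ?_⟩
  · rintro (_ | n)
    exacts [isOpen_univ, hU.1 n]
  · rintro (_ | n)
    exacts [(hU.2.1 0).mono (subset_univ _), hU.2.1 n]
  · rintro (_ | n)
    exacts [subset_univ _, hU.2.2 n]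
  · refine (hfol k).trans (congrArg (s k) (funext fun i => ?_))
    induction i using Fin.cases <;> rfl
  · ext x
    simp only [mem_iInter]
    exact ⟨fun h n => h (n + 1), fun h => by rintro (_ | n); exacts [mem_univ x, h n]⟩

end OddToEve

section Cylinders

variable {E : ℕ → Type*}

theorem iInter_cylinder_eq_singleton {c : ℕ → ∀ n, E n} {L : ℕ → ℕ} (hL : ∀ k, k < L k)
    (hc : ∀ ⦃k j⦄, k ≤ j → c j ∈ cylinder (c k) (L k)) :
    ⋂ k, cylinder (c k) (L k) = {fun i => c i i} := by
  ext y
  simp only [mem_iInter, mem_singleton_iff]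
  refine ⟨fun hy => funext fun i => hy i i (hL i), ?_⟩
  rintro rfl k i hi
  rcases le_or_gt k i with hki | hik
  · exact hc hki i hi
  · exact (hc hik.le i (hL i)).symm

variable [∀ n, TopologicalSpace (E n)] [∀ n, DiscreteTopology (E n)]

lemma exists_cylinder_subset_of_mem_nhds {x : ∀ n, E n} {U : Set (∀ n, E n)} (hU : U ∈ 𝓝 x) :
    ∃ n, cylinder x n ⊆ U := by
  obtain ⟨_, ⟨y, n, rfl⟩, hx, hsub⟩ := (isTopologicalBasis_cylinders E).mem_nhds_iff.1 hU
  exact ⟨n, mem_cylinder_iff_eq.1 hx ▸ hsub⟩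

instance : PerfectSpace (ℕ → Bool) := by
  refine ⟨preperfect_iff_nhds.2 fun x _ U hU => ?_⟩
  obtain ⟨n, hn⟩ := exists_cylinder_subset_of_mem_nhds hU
  exact ⟨update x n !(x n), ⟨hn (update_mem_cylinder x n _), trivial⟩,
    fun h => by simpa using congrFun h n⟩

end Cylinders

lemma perfect_range_of_continuous_injective {α β : Type*} [TopologicalSpace α] [CompactSpace α]
    [PerfectSpace α] [TopologicalSpace β] [T2Space β] {φ : α → β} (hφ : Continuous φ)
    (hinj : Injective φ) : Perfect (range φ) := by
  refine ⟨(isCompact_range hφ).isClosed, preperfect_iff_nhds.2 ?_⟩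
  rintro _ ⟨a, rfl⟩ U hU
  obtain ⟨b, ⟨hbU, -⟩, hba⟩ :=
    preperfect_iff_nhds.1 PerfectSpace.univ_preperfect a trivial _ (hφ.continuousAt hU)
  exact ⟨φ b, ⟨hbU, mem_range_self b⟩, hinj.ne hba⟩

section Bernstein

variable {α : Type*} [TopologicalSpace α]

def IsBernsteinSet (X : Set α) : Prop :=
  ∀ P : Set α, P.Nonempty → IsCompletelyMetrizable P → (∀ x ∈ P, x ∈ closure (P \ {x})) →
    (X ∩ P).Nonempty ∧ (P \ X).Nonempty

variable {X : Set α}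

lemma Preperfect.mem_closure_diff_singleton {P : Set α} (hP : Preperfect P) {x : α} (hx : x ∈ P) :
    x ∈ closure (P \ {x}) := by
  rw [mem_closure_iff_clusterPt, ← accPt_principal_iff_clusterPt]
  exact hP x hx

variable [IsCompletelyMetrizableSpace α]

lemma IsBernsteinSet.inter_nonempty_and_diff_nonempty (hX : IsBernsteinSet X) {P : Set α}
    (hP : Perfect P) (hne : P.Nonempty) : (X ∩ P).Nonempty ∧ (P \ X).Nonempty :=
  hX P hne hP.closed.isCompletelyMetrizableSpace.complete fun _ => hP.acc.mem_closure_diff_singleton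

lemma IsBernsteinSet.nonempty [PerfectSpace α] [Nonempty α] (hX : IsBernsteinSet X) :
    X.Nonempty := by
  simpa using (hX.inter_nonempty_and_diff_nonempty (PerfectSpace.univ_perfect α) univ_nonempty).1

lemma IsBernsteinSet.preperfect [PerfectSpace α] (hX : IsBernsteinSet X) : Preperfect X := by
  refine preperfect_iff_nhds.2 fun x _ U hU => ?_
  obtain ⟨V, hVU, hV, hxV⟩ := mem_nhds_iff.1 hU
  obtain ⟨y, ⟨hyV, -⟩, hyx⟩ :=
    preperfect_iff_nhds.1 PerfectSpace.univ_preperfect x trivial V (hV.mem_nhds hxV)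
  obtain ⟨t, ht, htc, htV⟩ : ∃ t ∈ 𝓝 y, IsClosed t ∧ t ⊆ V \ {x} :=
    exists_mem_nhds_isClosed_subset ((hV.sdiff isClosed_singleton).mem_nhds ⟨hyV, hyx⟩)
  obtain ⟨z, hzX, hz⟩ := (hX.inter_nonempty_and_diff_nonempty isOpen_interior.perfect_closure
    ⟨y, subset_closure (mem_interior_iff_mem_nhds.2 ht)⟩).1
  obtain ⟨hzV, hzx⟩ := htV (closure_minimal interior_subset htc hz)
  exact ⟨z, ⟨hVU hzV, hzX⟩, hzx⟩

end Bernstein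

section Splitting

variable {E : ℕ → Type*} [∀ n, TopologicalSpace (E n)] {X : Set (∀ n, E n)}

/-- Odd's way of splitting each of Eve's moves into two disjoint basic open sets. -/
structure CylinderSplitting (X : Set (∀ n, E n)) where
  center : Set X → ℕ → Bool → X
  len : Set X → ℕ → ℕ
  lt_len : ∀ A n, n < len A n
  preimage_subset : ∀ A n b, IsOpen A → A.Nonempty →
    (↑) ⁻¹' cylinder (center A n b : ∀ n, E n) (len A n) ⊆ A
  pairwise_disjoint : ∀ A n, IsOpen A → A.Nonempty →
    Pairwise (Disjoint on fun b => cylinder (center A n b : ∀ n, E n) (len A n))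

namespace CylinderSplitting

variable (S : CylinderSplitting X) (e : TopEveStrategy X)

def oddStrategy (f : ℕ → Bool) : TopOddStrategy X := fun k v =>
  (↑) ⁻¹' cylinder (S.center (v (Fin.last _)) k (f k) : ∀ n, E n) (S.len (v (Fin.last _)) k)

def play (f : ℕ → Bool) : ℕ → Set X := outcome e (S.oddStrategy f)

def centerAt (f : ℕ → Bool) (k : ℕ) : X := S.center (S.play e f (2 * k)) k (f k)

def lenAt (f : ℕ → Bool) (k : ℕ) : ℕ := S.len (S.play e f (2 * k)) k

def limit (f : ℕ → Bool) : ∀ n, E n := fun i => (S.centerAt e f i : ∀ n, E n) i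

lemma play_two_mul_add_one (f : ℕ → Bool) (k : ℕ) :
    S.play e f (2 * k + 1) = (↑) ⁻¹' cylinder (S.centerAt e f k : ∀ n, E n) (S.lenAt e f k) :=
  topOddFollows_outcome e _ k

lemma play_eq_of_mem_cylinder {f g : ℕ → Bool} {n : ℕ} (h : g ∈ cylinder f n) :
    ∀ i ≤ 2 * n, S.play e g i = S.play e f i :=
  outcome_congr fun k hk => by unfold oddStrategy; rw [h k hk]

lemma continuous_limit : Continuous (S.limit e) := by
  refine continuous_pi fun i => IsLocallyConstant.continuous ?_
  refine (IsLocallyConstant.iff_eventually_eq _).2 fun f => ?_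
  filter_upwards [(isOpen_cylinder _ f (i + 1)).mem_nhds (self_mem_cylinder f (i + 1))] with g hg
  simp only [limit, centerAt, S.play_eq_of_mem_cylinder e hg (2 * i) (by omega), hg i i.lt_succ_self]

end CylinderSplitting

variable [∀ n, DiscreteTopology (E n)]

lemma Preperfect.exists_cylinder_split (hX : Preperfect X) {A : Set X} (hA : IsOpen A)
    (hne : A.Nonempty) (n : ℕ) :
    ∃ (x : Bool → X) (L : ℕ), n < L ∧ (∀ b, (↑) ⁻¹' cylinder (x b : ∀ n, E n) L ⊆ A) ∧
      Pairwise (Disjoint on fun b => cylinder (x b : ∀ n, E n) L) := by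
  obtain ⟨V, hV, rfl⟩ := isOpen_induced_iff.1 hA
  obtain ⟨a, haV⟩ := hne
  obtain ⟨b, ⟨hbV, hbX⟩, hba⟩ := preperfect_iff_nhds.1 hX a a.2 V (hV.mem_nhds haV)
  obtain ⟨la, hla⟩ := exists_cylinder_subset_of_mem_nhds (hV.mem_nhds haV)
  obtain ⟨lb, hlb⟩ := exists_cylinder_subset_of_mem_nhds (hV.mem_nhds hbV)
  set j := firstDiff (a : ∀ n, E n) b
  have hj : (a : ∀ n, E n) j ≠ b j := apply_firstDiff_ne (Ne.symm hba)
  set L := max (max (n + 1) (j + 1)) (max la lb)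
  have hdisj : Disjoint (cylinder (a : ∀ n, E n) L) (cylinder b L) :=
    disjoint_left.2 fun y hya hyb => hj ((hya j (by omega)).symm.trans (hyb j (by omega)))
  refine ⟨fun t => cond t a ⟨b, hbX⟩, L, by omega, ?_, ?_⟩
  · rintro (_ | _) y hy
    exacts [hlb (cylinder_anti _ (by omega) hy), hla (cylinder_anti _ (by omega) hy)]
  · rintro (_ | _) (_ | _) h
    exacts [absurd rfl h, hdisj.symm, hdisj, absurd rfl h]

lemma Preperfect.nonempty_cylinderSplitting [Nonempty X] (hX : Preperfect X) :
    Nonempty (CylinderSplitting X) := by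
  have key : ∀ (A : Set X) (n : ℕ), ∃ (x : Bool → X) (L : ℕ), n < L ∧ (IsOpen A → A.Nonempty →
      (∀ b, (↑) ⁻¹' cylinder (x b : ∀ n, E n) L ⊆ A) ∧
        Pairwise (Disjoint on fun b => cylinder (x b : ∀ n, E n) L)) := by
    intro A n
    by_cases hA : IsOpen A ∧ A.Nonempty
    · obtain ⟨x, L, hL, hsub, hdisj⟩ := hX.exists_cylinder_split hA.1 hA.2 n
      exact ⟨x, L, hL, fun _ _ => ⟨hsub, hdisj⟩⟩
    · exact ⟨fun _ => Classical.arbitrary X, n + 1, n.lt_succ_self, fun h h' => absurd ⟨h, h'⟩ hA⟩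
  choose x L hL hspec using key
  exact ⟨⟨x, L, hL, fun A n b hA hne => (hspec A n hA hne).1 b,
    fun A n hA hne => (hspec A n hA hne).2⟩⟩

namespace CylinderSplitting

variable (S : CylinderSplitting X) (e : TopEveStrategy X)

lemma topOddValid_oddStrategy (f : ℕ → Bool) : TopOddValid (S.oddStrategy f) := by
  intro k v hv
  have hA := hv.1 (Fin.last _)
  have hne := hv.2.1 (Fin.last _)
  refine ⟨(isOpen_cylinder E _ _).preimage continuous_subtype_val,
    ⟨_, self_mem_cylinder _ _⟩, S.preimage_subset _ _ _ hA hne⟩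

variable {e}

lemma topPlay_play (he : TopEveValid e) (f : ℕ → Bool) : TopPlay (S.play e f) :=
  topPlay_outcome he (S.topOddValid_oddStrategy f)

lemma antitone_play (he : TopEveValid e) (f : ℕ → Bool) : Antitone (S.play e f) :=
  antitone_nat_of_succ_le (S.topPlay_play he f).2.2

lemma centerAt_mem_cylinder (he : TopEveValid e) (f : ℕ → Bool) {k j : ℕ} (hkj : k ≤ j) :
    (S.centerAt e f j : ∀ n, E n) ∈ cylinder (S.centerAt e f k) (S.lenAt e f k) := by
  have hj : S.centerAt e f j ∈ S.play e f (2 * j + 1) := by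
    rw [play_two_mul_add_one]
    exact self_mem_cylinder _ _
  have := S.antitone_play he f (by omega : 2 * k + 1 ≤ 2 * j + 1) hj
  rwa [play_two_mul_add_one] at this

lemma iInter_cylinder_eq_singleton_limit (he : TopEveValid e) (f : ℕ → Bool) :
    ⋂ k, cylinder (S.centerAt e f k : ∀ n, E n) (S.lenAt e f k) = {S.limit e f} :=
  iInter_cylinder_eq_singleton (fun k => S.lt_len _ k) fun _ _ => S.centerAt_mem_cylinder he f

lemma limit_mem_cylinder (he : TopEveValid e) (f : ℕ → Bool) (k : ℕ) :
    S.limit e f ∈ cylinder (S.centerAt e f k : ∀ n, E n) (S.lenAt e f k) :=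
  mem_iInter.1 (by rw [S.iInter_cylinder_eq_singleton_limit he f]; exact mem_singleton _) k

lemma iInter_play (he : TopEveValid e) (f : ℕ → Bool) :
    ⋂ n, S.play e f n = (↑) ⁻¹' {S.limit e f} := by
  have hodd : ⋂ n, S.play e f n = ⋂ k, S.play e f (2 * k + 1) :=
    subset_antisymm (subset_iInter fun k => iInter_subset _ _)
      (subset_iInter fun n => (iInter_subset _ n).trans (S.antitone_play he f (by omega)))
  simp only [hodd, play_two_mul_add_one, ← preimage_iInter, S.iInter_cylinder_eq_singleton_limit he]

lemma injective_limit (he : TopEveValid e) : Injective (S.limit e) := by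
  intro f g hfg
  by_contra hne
  have hgf : g ∈ cylinder f (firstDiff f g) := by
    rw [firstDiff_comm]
    exact mem_cylinder_firstDiff g f
  set n := firstDiff f g
  set A := S.play e f (2 * n)
  have hA : S.play e g (2 * n) = A := S.play_eq_of_mem_cylinder e hgf _ le_rfl
  have hplay := S.topPlay_play he f
  have hdisj := S.pairwise_disjoint A n (hplay.1 _) (hplay.2.1 _) (apply_firstDiff_ne hne)
  have hg := S.limit_mem_cylinder he g n
  rw [centerAt, lenAt, hA] at hg
  exact hdisj.ne_of_mem (S.limit_mem_cylinder he f n) hg hfg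

end CylinderSplitting

theorem TopEveValid.exists_perfect_iInter_play_eq [Nonempty X] {e : TopEveStrategy X}
    (he : TopEveValid e) (hX : Preperfect X) :
    ∃ P : Set (∀ n, E n), P.Nonempty ∧ Perfect P ∧ ∀ y ∈ P,
      ∃ U : ℕ → Set X, TopPlay U ∧ TopEveFollows U e ∧ ⋂ n, U n = (↑) ⁻¹' {y} := by
  obtain ⟨S⟩ := hX.nonempty_cylinderSplitting
  refine ⟨range (S.limit e), range_nonempty _,
    perfect_range_of_continuous_injective (S.continuous_limit e) (S.injective_limit he), ?_⟩
  rintro _ ⟨f, rfl⟩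
  exact ⟨S.play e f, S.topPlay_play he f, topEveFollows_outcome e _, S.iInter_play he f⟩

end Splitting

/-- If `X` is a Bernstein set in the Cantor space `2^ω`
(i.e. both `X ∩ P` and `P \ X` are nonempty for every nonempty completely
metrizable subset `P ⊆ 2^ω` without isolated points), then the classical
Banach–Mazur game `BM(X)`, played in `X` with the subspace topology, is
undetermined: neither Odd nor Eve has a winning strategy. -/
theorem bm_undetermined_of_bernstein (X : Set (ℕ → Bool))
    (hBernstein : ∀ P : Set (ℕ → Bool), P.Nonempty → IsCompletelyMetrizable ↥P →
      (∀ x ∈ P, x ∈ closure (P \ {x})) → (X ∩ P).Nonempty ∧ (P \ X).Nonempty) :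
    ¬ TopOddWins ↥X ∧ ¬ TopEveWins ↥X := by
  have hX : IsBernsteinSet X := hBernstein
  have : Nonempty X := hX.nonempty.to_subtype
  constructor
  · rintro ⟨s, hs, hwin⟩
    obtain ⟨P, hPne, hP, hplays⟩ := hs.toEve.exists_perfect_iInter_play_eq hX.preperfect
    obtain ⟨z, hzP, hzX⟩ := (hX.inter_nonempty_and_diff_nonempty hP hPne).2
    obtain ⟨U, hU, hfol, hUz⟩ := hplays z hzP
    obtain ⟨V, hV, hVfol, hVU⟩ := hU.exists_topOddFollows_of_toEve hfol
    obtain ⟨y, hy⟩ := hwin V hV hVfol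
    rw [hVU, hUz, mem_preimage, mem_singleton_iff] at hy
    exact hzX (hy ▸ y.2)
  · rintro ⟨e, he, hwin⟩
    obtain ⟨P, hPne, hP, hplays⟩ := he.exists_perfect_iInter_play_eq hX.preperfect
    obtain ⟨y, hyX, hyP⟩ := (hX.inter_nonempty_and_diff_nonempty hP hPne).1
    obtain ⟨U, hU, hfol, hUy⟩ := hplays y hyP
    exact hwin U hU hfol ⟨⟨y, hyX⟩, by rw [hUy]; rfl⟩
end

section
/- Let L be a first-order language, let K be a class of finitely generated L-structures, and let U be an L-structure such that Odd has a winning strategy in the game BM(K, U). Then every member of K embeds into U, and K has the joint embedding property: for all X, Y ∈ K there exist Z ∈ K and embeddings of X into Z and of Y into Z. -/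
/-! The Banach–Mazur game played with finitely generated structures.
Following the footnote of the paper, all structures "live" in a fixed
ambient set `Ω`: a structure is a subset of `Ω` together with an
`L`-structure on it, and an extension of structures is an inclusion of
carriers for which the inclusion map is an embedding. -/

open FirstOrder

universe u v w

/-- An `L`-structure living on a subset of the ambient set `Ω`. -/
structure SubStr (L : FirstOrder.Language.{u, v}) (Ω : Type w) where
  carrier : Set Ω
  str : L.Structure carrier

/-- `N` is an extension of `M` (i.e. `M` is a substructure of `N`):
the carrier of `M` is contained in that of `N` and the inclusion map is an
`L`-embedding. -/
def SubStr.Ext {L : FirstOrder.Language.{u, v}} {Ω : Type w} (M N : SubStr L Ω) : Prop :=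
  M.carrier ⊆ N.carrier ∧
    letI := M.str
    letI := N.str
    ∃ f : M.carrier ↪[L] N.carrier, ∀ x : M.carrier, (f x : Ω) = (x : Ω)

/-- The type of `L`-embeddings between two structures living in `Ω`. -/
def SubStr.Emb {L : FirstOrder.Language.{u, v}} {Ω : Type w} (M N : SubStr L Ω) : Type _ :=
  letI := M.str
  letI := N.str
  M.carrier ↪[L] N.carrier

/-- The type of `L`-embeddings of `M` into an abstract `L`-structure `V`. -/
def SubStr.EmbTo {L : FirstOrder.Language.{u, v}} {Ω : Type w} (M : SubStr L Ω)
    (V : Type*) [L.Structure V] : Type _ :=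
  letI := M.str
  M.carrier ↪[L] V

/-- `M` and `N` are isomorphic. -/
def SubStr.Iso {L : FirstOrder.Language.{u, v}} {Ω : Type w} (M N : SubStr L Ω) : Prop :=
  letI := M.str
  letI := N.str
  Nonempty (M.carrier ≃[L] N.carrier)

/-- `M` is finitely generated. -/
def SubStr.FG {L : FirstOrder.Language.{u, v}} {Ω : Type w} (M : SubStr L Ω) : Prop :=
  letI := M.str
  Language.Structure.FG L M.carrier

section Game

variable {L : FirstOrder.Language.{u, v}} {Ω : Type w}

/-- A play of the game `BM(K, ·)`: an increasing chain of members of `K`,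
each an extension of the previous one. -/
def StrPlay (K : Set (SubStr L Ω)) (u : ℕ → SubStr L Ω) : Prop :=
  (∀ n, u n ∈ K) ∧ ∀ n, (u n).Ext (u (n + 1))

/-- A finite chain in `K` (a partial play). -/
def StrPartialPlay (K : Set (SubStr L Ω)) {m : ℕ} (v : Fin m → SubStr L Ω) : Prop :=
  (∀ i, v i ∈ K) ∧ ∀ i : Fin m, ∀ h : (i : ℕ) + 1 < m, (v i).Ext (v ⟨(i : ℕ) + 1, h⟩)

/-- A strategy for Odd: a value for every finite chain of odd length. -/
def StrOddStrategy (L : FirstOrder.Language.{u, v}) (Ω : Type w) :=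
  (k : ℕ) → (Fin (2 * k + 1) → SubStr L Ω) → SubStr L Ω

/-- A strategy for Odd is valid (for the class `K`) if it assigns, to every
finite chain in `K` of odd length, a member of `K` extending its last term. -/
def StrOddValid (K : Set (SubStr L Ω)) (s : StrOddStrategy L Ω) : Prop :=
  ∀ (k : ℕ) (v : Fin (2 * k + 1) → SubStr L Ω), StrPartialPlay K v →
    s k v ∈ K ∧ (v (Fin.last (2 * k))).Ext (s k v)

/-- A play follows Odd's strategy `s` if every odd-indexed term is the value of
`s` on the preceding terms. -/
def StrOddFollows (u : ℕ → SubStr L Ω) (s : StrOddStrategy L Ω) : Prop :=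
  ∀ k : ℕ, u (2 * k + 1) = s k (fun i => u i.val)

/-- The union of a play, as a structure on `⋃ n, (u n).carrier`, is isomorphic
to the `L`-structure `V`: there is an `L`-structure on the union whose
inclusions from all the `u n` are embeddings (for an increasing chain such a
structure is unique) and which is isomorphic to `V`. -/
def StrUnionIso (u : ℕ → SubStr L Ω) (V : Type*) [L.Structure V] : Prop :=
  ∃ S : L.Structure ↥(⋃ n, (u n).carrier),
    (∀ n, (u n).Ext ⟨⋃ n, (u n).carrier, S⟩) ∧
    (letI := S; Nonempty (↥(⋃ n, (u n).carrier) ≃[L] V))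

/-- Odd has a winning strategy in the game `BM(K, Win)`, where `Win` describes
the plays won by Odd. -/
def StrOddWins (K : Set (SubStr L Ω)) (Win : (ℕ → SubStr L Ω) → Prop) : Prop :=
  ∃ s : StrOddStrategy L Ω, StrOddValid K s ∧
    ∀ u : ℕ → SubStr L Ω, StrPlay K u → StrOddFollows u s → Win u

end Game

section Aux

variable {L : FirstOrder.Language.{u, v}} {Ω : Type w}

lemma SubStr.Ext.refl' (M : SubStr L Ω) : M.Ext M := by
  refine ⟨le_refl _, ?_⟩
  letI := M.str
  exact ⟨Language.Embedding.refl L M.carrier, fun x => rfl⟩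

lemma SubStr.Ext.trans' {M N P : SubStr L Ω} (h₁ : M.Ext N) (h₂ : N.Ext P) : M.Ext P := by
  obtain ⟨hs₁, h₁⟩ := h₁
  obtain ⟨hs₂, h₂⟩ := h₂
  refine ⟨hs₁.trans hs₂, ?_⟩
  letI := M.str; letI := N.str; letI := P.str
  obtain ⟨f, hf⟩ := h₁
  obtain ⟨g, hg⟩ := h₂
  exact ⟨g.comp f, fun x => by simp [Language.Embedding.comp_apply, hg, hf]⟩

/-- The chain of structures built by following Odd's strategy `s`, starting from `M`,
with Eve copying Odd's previous move. -/
def chainFun (s : StrOddStrategy L Ω) (M : SubStr L Ω) : (k : ℕ) → Fin (2 * k + 1) → SubStr L Ω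
  | 0, _ => M
  | (k + 1), i => if h : (i : ℕ) < 2 * k + 1 then chainFun s M k ⟨i, h⟩ else s k (chainFun s M k)

lemma chainFun_succ_lt (s : StrOddStrategy L Ω) (M : SubStr L Ω) (k : ℕ)
    (i : Fin (2 * (k + 1) + 1)) (hn : (i : ℕ) < 2 * k + 1) :
    chainFun s M (k + 1) i = chainFun s M k ⟨i, hn⟩ := dif_pos hn

lemma chainFun_succ_ge (s : StrOddStrategy L Ω) (M : SubStr L Ω) (k : ℕ)
    (i : Fin (2 * (k + 1) + 1)) (hn : ¬ (i : ℕ) < 2 * k + 1) :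
    chainFun s M (k + 1) i = s k (chainFun s M k) := dif_neg hn

lemma chainFun_mono (s : StrOddStrategy L Ω) (M : SubStr L Ω) :
    ∀ (j k n : ℕ) (h : n < 2 * k + 1) (h' : n < 2 * (k + j) + 1),
      chainFun s M (k + j) ⟨n, h'⟩ = chainFun s M k ⟨n, h⟩ := by
  intro j
  induction j with
  | zero => intro k n h h'; rfl
  | succ j ih =>
    intro k n h h'
    exact (chainFun_succ_lt s M (k + j) ⟨n, h'⟩ (show n < 2 * (k + j) + 1 by omega)).trans
      (ih k n h (by omega))

lemma chainFun_eq (s : StrOddStrategy L Ω) (M : SubStr L Ω)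
    (k₁ k₂ n : ℕ) (h₁ : n < 2 * k₁ + 1) (h₂ : n < 2 * k₂ + 1) :
      chainFun s M k₁ ⟨n, h₁⟩ = chainFun s M k₂ ⟨n, h₂⟩ := by
  rcases le_total k₁ k₂ with h | h
  · obtain ⟨j, rfl⟩ := Nat.exists_eq_add_of_le h
    exact (chainFun_mono s M j k₁ n h₁ h₂).symm
  · obtain ⟨j, rfl⟩ := Nat.exists_eq_add_of_le h
    exact chainFun_mono s M j k₂ n h₂ h₁

/-- The play built by following Odd's strategy `s`, starting from `M`. -/
def playFun (s : StrOddStrategy L Ω) (M : SubStr L Ω) (n : ℕ) : SubStr L Ω :=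
  chainFun s M n ⟨n, by omega⟩

lemma chainFun_eq_playFun (s : StrOddStrategy L Ω) (M : SubStr L Ω)
    (k n : ℕ) (h : n < 2 * k + 1) : chainFun s M k ⟨n, h⟩ = playFun s M n :=
  chainFun_eq s M k n n h (by omega)

lemma chainFun_partialPlay {K : Set (SubStr L Ω)} {s : StrOddStrategy L Ω}
    (hv : StrOddValid K s) {M : SubStr L Ω} (hM : M ∈ K) (k : ℕ) :
    StrPartialPlay K (chainFun s M k) := by
  induction k with
  | zero =>
    refine ⟨fun i => hM, fun i h => ?_⟩
    omega
  | succ k ih =>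
    obtain ⟨hsK, hsExt⟩ := hv k (chainFun s M k) ih
    constructor
    · intro i
      rw [chainFun]
      split
      · exact ih.1 _
      · exact hsK
    · intro i h
      rcases lt_trichotomy ((i : ℕ) + 1) (2 * k + 1) with h1 | h1 | h1
      · have hi : (i : ℕ) < 2 * k + 1 := by omega
        rw [chainFun_succ_lt s M k i hi,
          chainFun_succ_lt s M k ⟨(i : ℕ) + 1, h⟩ (show (i : ℕ) + 1 < 2 * k + 1 from h1)]
        exact ih.2 ⟨i, hi⟩ h1
      · have hi : (i : ℕ) = 2 * k := by omega
        rw [chainFun_succ_lt s M k i (show (i : ℕ) < 2 * k + 1 by omega),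
          chainFun_succ_ge s M k ⟨(i : ℕ) + 1, h⟩ (show ¬ (i : ℕ) + 1 < 2 * k + 1 by omega)]
        have h2 : (⟨(i : ℕ), by omega⟩ : Fin (2 * k + 1)) = Fin.last (2 * k) := by
          ext; simpa using hi
        rw [h2]
        exact hsExt
      · rw [chainFun_succ_ge s M k i (show ¬ (i : ℕ) < 2 * k + 1 by omega),
          chainFun_succ_ge s M k ⟨(i : ℕ) + 1, h⟩ (show ¬ (i : ℕ) + 1 < 2 * k + 1 by omega)]
        exact SubStr.Ext.refl' _

lemma playFun_play {K : Set (SubStr L Ω)} {s : StrOddStrategy L Ω}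
    (hv : StrOddValid K s) {M : SubStr L Ω} (hM : M ∈ K) :
    StrPlay K (playFun s M) := by
  constructor
  · intro n
    exact (chainFun_partialPlay hv hM n).1 ⟨n, by omega⟩
  · intro n
    have h1 : n < 2 * (n + 1) + 1 := by omega
    have h2 : n + 1 < 2 * (n + 1) + 1 := by omega
    rw [← chainFun_eq_playFun s M (n + 1) n h1, ← chainFun_eq_playFun s M (n + 1) (n + 1) h2]
    exact (chainFun_partialPlay hv hM (n + 1)).2 ⟨n, h1⟩ h2

lemma playFun_follows (s : StrOddStrategy L Ω) (M : SubStr L Ω) :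
    StrOddFollows (playFun s M) s := by
  intro k
  have h1 : 2 * k + 1 < 2 * (k + 1) + 1 := by omega
  rw [← chainFun_eq_playFun s M (k + 1) (2 * k + 1) h1]
  rw [chainFun_succ_ge s M k ⟨2 * k + 1, h1⟩ (show ¬ 2 * k + 1 < 2 * k + 1 by omega)]
  congr 1
  funext i
  exact chainFun_eq_playFun s M k i i.isLt

lemma playFun_zero (s : StrOddStrategy L Ω) (M : SubStr L Ω) : playFun s M 0 = M := rfl

lemma carrier_mono {K : Set (SubStr L Ω)} {u : ℕ → SubStr L Ω}
    (hu : StrPlay K u) {m n : ℕ} (h : m ≤ n) : (u m).carrier ⊆ (u n).carrier := by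
  induction n with
  | zero => rw [Nat.le_zero.mp h]
  | succ n ih =>
    rcases Nat.lt_or_ge m (n + 1) with h' | h'
    · exact (ih (by omega)).trans (hu.2 n).1
    · rw [show m = n + 1 by omega]

lemma ext_of_le {K : Set (SubStr L Ω)} {u : ℕ → SubStr L Ω}
    (hu : StrPlay K u) {m n : ℕ} (h : m ≤ n) : (u m).Ext (u n) := by
  induction n with
  | zero => rw [Nat.le_zero.mp h]; exact SubStr.Ext.refl' _
  | succ n ih =>
    rcases Nat.lt_or_ge m (n + 1) with h' | h'
    · exact (ih (by omega)).trans' (hu.2 n)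
    · rw [show m = n + 1 by omega]; exact SubStr.Ext.refl' _

end Aux

/-- Let `K` be a class of finitely generated `L`-structures
and `U` an `L`-structure such that Odd has a winning strategy in `BM(K, U)`.
Then every member of `K` embeds into `U`, and `K` has the joint embedding
property. -/
theorem universality_and_jep_of_odd_wins {L : FirstOrder.Language.{u, v}} {Ω : Type w}
    (K : Set (SubStr L Ω))
    (hfg : ∀ M ∈ K, M.FG)
    (U : Type*) [L.Structure U]
    -- Odd has a winning strategy in `BM(K, U)`:
    (hodd : StrOddWins K (fun u => StrUnionIso u U)) :
    (∀ M ∈ K, Nonempty (M.EmbTo U)) ∧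
    (∀ X ∈ K, ∀ Y ∈ K, ∃ Z ∈ K,
      Nonempty (SubStr.Emb X Z) ∧ Nonempty (SubStr.Emb Y Z)) := by
  obtain ⟨s, hv, hwin⟩ := hodd
  have key : ∀ M ∈ K, ∃ u : ℕ → SubStr L Ω, u 0 = M ∧ StrPlay K u ∧ StrUnionIso u U :=
    fun M hM => ⟨playFun s M, playFun_zero s M, playFun_play hv hM,
      hwin _ (playFun_play hv hM) (playFun_follows s M)⟩
  have univ : ∀ M ∈ K, Nonempty (M.EmbTo U) := by
    intro M hM
    obtain ⟨u, hu0, hup, S, hext, hiso⟩ := key M hM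
    letI := S
    obtain ⟨g⟩ := hiso
    have hext0 := hext 0
    rw [hu0] at hext0
    letI := M.str
    obtain ⟨-, f, hf⟩ := hext0
    exact ⟨g.toEmbedding.comp f⟩
  refine ⟨univ, ?_⟩
  intro X hX Y hY
  obtain ⟨u, hu0, hup, S, hext, hiso⟩ := key X hX
  letI := S
  obtain ⟨g⟩ := hiso
  letI := Y.str
  obtain ⟨e⟩ := univ Y hY
  have e' : Y.carrier ↪[L] U := e
  let h : Y.carrier ↪[L] ↥(⋃ n, (u n).carrier) := g.symm.toEmbedding.comp e'
  have hYfg : Language.Structure.FG L Y.carrier := hfg Y hY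
  obtain ⟨t, ht⟩ := hYfg.range h.toHom
  -- find an `N` such that all generators of the range of `h` lie in `(u N).carrier`
  have hmem : ∀ x : ↥(⋃ n, (u n).carrier), ∃ n, (x : Ω) ∈ (u n).carrier := by
    intro x
    exact Set.mem_iUnion.mp x.2
  choose fn hfn using hmem
  obtain ⟨N, hN⟩ : ∃ N, ∀ x ∈ t, (x : Ω) ∈ (u N).carrier := by
    refine ⟨t.sup fn, fun x hx => ?_⟩
    exact carrier_mono hup (Finset.le_sup hx) (hfn x)
  letI := (u N).str
  obtain ⟨hsub, eN, heN⟩ := hext N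
  have hrange : ∀ x : ↥(⋃ n, (u n).carrier), (x : Ω) ∈ (u N).carrier →
      x ∈ eN.toHom.range := by
    intro x hx
    exact ⟨⟨(x : Ω), hx⟩, Subtype.ext (heN _)⟩
  have hle : h.toHom.range ≤ eN.toHom.range := by
    rw [← ht, Language.Substructure.closure_le]
    intro x hx
    exact hrange x (hN x hx)
  let k0 : Y.carrier ↪[L] eN.toHom.range :=
    h.codRestrict _ (fun c => hle (h.toHom.mem_range_self c))
  let kY : Y.carrier ↪[L] (u N).carrier := eN.equivRange.symm.toEmbedding.comp k0
  have hextN := ext_of_le hup (Nat.zero_le N)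
  rw [hu0] at hextN
  letI := X.str
  obtain ⟨-, kX, -⟩ := hextN
  exact ⟨u N, hup.1 N, ⟨kX⟩, ⟨kY⟩⟩
end
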